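/- arXiv:2411.07418 — 6 statements merged into one kernel-verified Lean document; each statement's English description precedes it below -/
import Mathlib

section
/- Let g ≥ 2 and let D = {d₁,…,d_t} ⊆ {0,…,g−1} with d₁ the smallest element and t ≥ 2. Let a, a' be positive integers with gcd(g, a) = 1 and set p := a'·φ(a(g−1)) and δ := gcd(a·a', d₂−d₁, …, d_t−d₁). Then there exists a finite word w with all digits in D such that p divides the length of w, the base-g value (w)_g ≡ δ (mod a), and the digit sum S_g(w) ≡ δ (mod a'). -/
/-!
By Bézout, some digits `b₁, …, b_r ∈ D` satisfy `∑ (bᵢ - d₁) ≡ δ (mod a a')`. Put `p = n + 1` and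
pad each `bᵢ` with `n` copies of `d₁`. By Euler's theorem `a (g - 1) ∣ g ^ p - 1`, so `a` divides
the repunit `1 + g + ⋯ + g ^ (p - 1)` and `g ^ p ≡ 1 (mod a)`: every block has value
`≡ bᵢ - d₁ (mod a)` wherever it sits. Its digit sum is `bᵢ - d₁ + p d₁ ≡ bᵢ - d₁ (mod a')`.
-/

open Finset

theorem exists_list_sum_eq_mul_gcd {α : Type*} [DecidableEq α] {m : ℕ} [NeZero m]
    (f : α → ℕ) (s : Finset α) (c : ZMod m) :
    ∃ l : List α, (∀ x ∈ l, x ∈ s) ∧ ((l.map f).sum : ZMod m) = c * (s.gcd f : ℕ) := by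
  induction s using Finset.induction_on generalizing c with
  | empty => exact ⟨[], by simp, by simp⟩
  | insert x s hx ih =>
    set G := s.gcd f
    obtain ⟨l, hls, hl⟩ := ih (c * Nat.gcdB (f x) G)
    refine ⟨List.replicate (c * Nat.gcdA (f x) G).val x ++ l, ?_, ?_⟩
    · intro y hy
      rcases List.mem_append.1 hy with hy | hy
      · rw [List.eq_of_mem_replicate hy]
        exact mem_insert_self x s
      · exact mem_insert_of_mem (hls y hy)
    · have hbezout := congrArg (Int.cast : ℤ → ZMod m) (Nat.gcd_eq_gcd_ab (f x) G)
      push_cast at hbezout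
      rw [show (insert x s).gcd f = Nat.gcd (f x) G from gcd_insert, hbezout, List.map_append,
        List.map_replicate, List.sum_append, List.sum_replicate, smul_eq_mul, Nat.cast_add,
        Nat.cast_mul, ZMod.natCast_zmod_val, hl]
      ring

theorem exists_list_sum_modEq_gcd {α : Type*} [DecidableEq α] (m : ℕ) [NeZero m]
    (f : α → ℕ) (s : Finset α) :
    ∃ l : List α, (∀ x ∈ l, x ∈ s) ∧ (l.map f).sum ≡ Nat.gcd m (s.gcd f) [MOD m] := by
  obtain ⟨l, hls, hl⟩ := exists_list_sum_eq_mul_gcd f s (Nat.gcdB m (s.gcd f) : ZMod m)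
  refine ⟨l, hls, (ZMod.natCast_eq_natCast_iff _ _ _).1 ?_⟩
  have hbezout := congrArg (Int.cast : ℤ → ZMod m) (Nat.gcd_eq_gcd_ab m (s.gcd f))
  push_cast [ZMod.natCast_self] at hbezout
  rw [hl, hbezout]
  ring

theorem ofDigits_replicate (g k d : ℕ) :
    Nat.ofDigits g (List.replicate k d) = d * ∑ i ∈ range k, g ^ i := by
  induction k with
  | zero => simp
  | succ k ih =>
    rw [List.replicate_succ, Nat.ofDigits_cons, ih, geom_sum_succ]
    ring

theorem dvd_geom_sum_of_totient_dvd {g a k : ℕ} (hg : 2 ≤ g) (hcop : g.Coprime a)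
    (hk : Nat.totient (a * (g - 1)) ∣ k) : a ∣ ∑ i ∈ range k, g ^ i := by
  obtain ⟨c, rfl⟩ := hk
  have hcop' : g.Coprime (a * (g - 1)) :=
    hcop.mul_right ((Nat.coprime_self_sub_right (by omega)).2 (Nat.coprime_one_right g))
  have hpow : g ^ (Nat.totient (a * (g - 1)) * c) ≡ 1 [MOD a * (g - 1)] := by
    simpa [pow_mul] using (Nat.ModEq.pow_totient hcop').pow c
  have hdvd := (Nat.modEq_iff_dvd' (Nat.one_le_pow _ _ (by omega))).1 hpow.symm
  rw [← geom_sum_mul_of_one_le (by omega)] at hdvd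
  exact Nat.dvd_of_mul_dvd_mul_right (by omega) hdvd

def paddedBlocks (n d : ℕ) (l : List ℕ) : List ℕ :=
  l.flatMap fun b => b :: List.replicate n d

section paddedBlocks

variable (n d : ℕ) (l : List ℕ)

theorem length_paddedBlocks : (paddedBlocks n d l).length = (n + 1) * l.length := by
  simp [paddedBlocks, List.length_flatMap, mul_comm]

theorem paddedBlocks_subset : paddedBlocks n d l ⊆ d :: l := by
  intro x hx
  simp only [paddedBlocks, List.mem_flatMap, List.mem_cons, List.mem_replicate] at hx
  obtain ⟨b, hb, rfl | ⟨-, rfl⟩⟩ := hx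
  · exact List.mem_cons_of_mem d hb
  · exact List.mem_cons_self

variable {R : Type*} [CommRing R]

theorem cast_sum_paddedBlocks (h : ((n + 1 : ℕ) : R) = 0) :
    ((paddedBlocks n d l).sum : R) = (l.map fun b : ℕ => (b : R) - d).sum := by
  induction l with
  | nil => simp [paddedBlocks]
  | cons b l ih =>
    rw [paddedBlocks, List.flatMap_cons, ← paddedBlocks, List.sum_append, List.sum_cons,
      List.sum_replicate, smul_eq_mul]
    push_cast at h ih ⊢
    rw [ih, List.map_cons, List.sum_cons]
    linear_combination (d : R) * h

theorem cast_ofDigits_paddedBlocks (g : ℕ) (h : ∑ i ∈ range (n + 1), (g : R) ^ i = 0) :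
    ((Nat.ofDigits g (paddedBlocks n d l) : ℕ) : R) = (l.map fun b : ℕ => (b : R) - d).sum := by
  have hg : (g : R) ^ (n + 1) = 1 := by
    rw [← sub_eq_zero, ← geom_sum_mul, h, zero_mul]
  rw [geom_sum_succ] at h
  induction l with
  | nil => simp [paddedBlocks]
  | cons b l ih =>
    rw [paddedBlocks, List.flatMap_cons, ← paddedBlocks, Nat.ofDigits_append, Nat.ofDigits_cons,
      ofDigits_replicate]
    push_cast at ih ⊢
    rw [ih, List.length_cons, List.length_replicate, hg, List.map_cons, List.sum_cons]
    linear_combination (d : R) * h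

end paddedBlocks

theorem bezout_word_general (g a a' : ℕ) (hg : 2 ≤ g) (ha : 1 ≤ a) (ha' : 1 ≤ a')
    (hgcd : Nat.gcd g a = 1)
    (D : Finset ℕ) (hD : D.Nonempty) :
    ∃ w : List ℕ, w ≠ [] ∧ (∀ d ∈ w, d ∈ D) ∧
      (a' * Nat.totient (a * (g - 1))) ∣ w.length ∧
      Nat.ofDigits g w ≡ Nat.gcd (a * a') (D.gcd fun d => d - D.min' hD) [MOD a] ∧
      w.sum ≡ Nat.gcd (a * a') (D.gcd fun d => d - D.min' hD) [MOD a'] := by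
  set d₁ := D.min' hD
  have hp : 0 < a' * Nat.totient (a * (g - 1)) :=
    Nat.mul_pos ha' (Nat.totient_pos.2 (Nat.mul_pos ha (by omega)))
  obtain ⟨n, hn⟩ := Nat.exists_eq_add_one_of_ne_zero hp.ne'
  have : NeZero (a * a') := ⟨(Nat.mul_pos ha ha').ne'⟩
  obtain ⟨l, hlD, hl⟩ := exists_list_sum_modEq_gcd (a * a') (fun d => d - d₁) D
  -- The extra block `d₁ d₁ ⋯ d₁` makes the word nonempty and contributes nothing.
  have hl₁D : ∀ b ∈ d₁ :: l, b ∈ D := List.forall_mem_cons.2 ⟨D.min'_mem hD, hlD⟩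
  have hsum (R : Type) [CommRing R] : ((d₁ :: l).map fun b : ℕ => (b : R) - d₁).sum =
      (((l.map fun d => d - d₁).sum : ℕ) : R) := by
    rw [List.map_cons, List.sum_cons, sub_self, zero_add, Nat.cast_list_sum, List.map_map]
    exact congrArg List.sum
      (List.map_congr_left fun b hb => (Nat.cast_sub (D.min'_le b (hlD b hb))).symm)
  refine ⟨paddedBlocks n d₁ (d₁ :: l), by simp [paddedBlocks],
    fun x hx => List.forall_mem_cons.2 ⟨D.min'_mem hD, hl₁D⟩ x (paddedBlocks_subset _ _ _ hx),
    by rw [length_paddedBlocks, ← hn]; exact dvd_mul_right _ _, ?_, ?_⟩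
  · have hrepunit : a ∣ ∑ i ∈ range (n + 1), g ^ i :=
      hn ▸ dvd_geom_sum_of_totient_dvd hg hgcd (dvd_mul_left _ _)
    rw [← ZMod.natCast_eq_natCast_iff, cast_ofDigits_paddedBlocks, hsum,
      ZMod.natCast_eq_natCast_iff]
    · exact hl.of_mul_right a'
    · exact_mod_cast (ZMod.natCast_eq_zero_iff _ a).2 hrepunit
  · rw [← ZMod.natCast_eq_natCast_iff, cast_sum_paddedBlocks, hsum, ZMod.natCast_eq_natCast_iff]
    · exact hl.of_mul_left a
    · rw [← hn, ZMod.natCast_eq_zero_iff]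
      exact dvd_mul_right _ _

/-- Bézout lemma: there is a word `w` over the digit set `D` whose length is a
(positive) multiple of `p := a' * φ(a(g-1))`, whose base-`g` value is `≡ δ (mod a)`
and whose digit sum is `≡ δ (mod a')`, where
`δ := gcd(a*a', d₂ - d₁, …, d_t - d₁)` with `d₁` the least digit of `D`. -/
theorem bezout_word (g a a' : ℕ) (hg : 2 ≤ g) (ha : 1 ≤ a) (ha' : 1 ≤ a')
    (hgcd : Nat.gcd g a = 1)
    (D : Finset ℕ) (hD : D.Nonempty) (hDsub : D ⊆ Finset.range g) (hcard : 2 ≤ D.card) :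
    ∃ w : List ℕ, w ≠ [] ∧ (∀ d ∈ w, d ∈ D) ∧
      (a' * Nat.totient (a * (g - 1))) ∣ w.length ∧
      Nat.ofDigits g w ≡ Nat.gcd (a * a') (D.gcd fun d => d - D.min' hD) [MOD a] ∧
      w.sum ≡ Nat.gcd (a * a') (D.gcd fun d => d - D.min' hD) [MOD a'] :=
  bezout_word_general g a a' hg ha ha' hgcd D hD
end

section
/- Let M be an irreducible and aperiodic stochastic matrix on a finite state space S that is doubly stochastic. Then for the Markov chain X with transition matrix M and any initial distribution μ, there exist C > 0 and ρ ∈ (0,1) such that |P(X_n = s) − 1/|S|| ≤ C·ρ^n for all n ∈ ℕ and s ∈ S; equivalently, |(μ M^n)(s) − 1/|S|| ≤ C ρ^n. -/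
/-!
Aperiodicity makes the return times to each state an additively closed set of natural numbers
with gcd 1, hence cofinite; together with irreducibility this yields a power `M ^ N` with all
entries positive. By Doeblin's argument `M ^ N` contracts the `ℓ¹` norm of vectors of total mass
zero by some factor `r < 1`, while `M` itself does not expand it. As `M` is doubly stochastic the
uniform vector is fixed, so `μ M ^ n - 1/|S|` is the image under `M ^ n` of a mass-zero vector of
`ℓ¹` norm at most 2, which gives the bound with `ρ = r ^ (1/N)`.
-/
open Filter Finset Matrix

namespace Nat

theorem eventually_mem_of_add_mem_of_setGcd_eq_one {s : Set ℕ}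
    (hadd : ∀ m ∈ s, ∀ n ∈ s, m + n ∈ s) (hs : setGcd s = 1) : ∀ᶠ n in atTop, n ∈ s := by
  have hclosure : ∀ m ∈ AddSubmonoid.closure s, m = 0 ∨ m ∈ s := fun m hm ↦ by
    induction hm using AddSubmonoid.closure_induction with
    | mem m hm => exact .inr hm
    | zero => exact .inl rfl
    | add m n _ _ hm hn =>
      rcases hm with rfl | hm
      · simpa using hn
      rcases hn with rfl | hn
      · exact .inr (by simpa using hm)
      exact .inr (hadd m hm n hn)
  obtain ⟨N, hN⟩ := exists_mem_closure_of_ge s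
  filter_upwards [eventually_ge_atTop N, eventually_gt_atTop 0] with m hmN hm0
  exact (hclosure m (hN m hmN (hs ▸ one_dvd m))).resolve_left hm0.ne'

end Nat

theorem Antitone.le_div_mul_rpow_inv_pow {u : ℕ → ℝ} (hu : Antitone u) {N : ℕ} (hN : 0 < N)
    {r B : ℝ} (hr0 : 0 < r) (hr1 : r ≤ 1) (hB : 0 ≤ B) (h : ∀ k, u (N * k) ≤ r ^ k * B)
    (n : ℕ) : u n ≤ B / r * (r ^ (N⁻¹ : ℝ)) ^ n := by
  have hexp : (N : ℝ)⁻¹ * n ≤ (n / N : ℕ) + 1 := by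
    rw [inv_mul_le_iff₀ (Nat.cast_pos.2 hN)]
    exact_mod_cast (Nat.lt_div_mul_add hN).le.trans_eq (by ring)
  have hpow : r ^ (n / N) * r ≤ (r ^ (N⁻¹ : ℝ)) ^ n := by
    rw [← pow_succ, ← Real.rpow_natCast, ← Real.rpow_natCast, ← Real.rpow_mul hr0.le]
    exact Real.rpow_le_rpow_of_exponent_ge hr0 hr1 (by exact_mod_cast hexp)
  calc u n ≤ u (N * (n / N)) := hu (Nat.mul_div_le n N)
    _ ≤ r ^ (n / N) * B := h _
    _ ≤ B / r * (r ^ (N⁻¹ : ℝ)) ^ n := by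
      rw [div_mul_eq_mul_div, le_div_iff₀ hr0, mul_right_comm, mul_comm B]
      exact mul_le_mul_of_nonneg_right hpow hB

theorem Finset.sum_abs_sub_le_sum_add_sum {ι : Type*} (s : Finset ι) {f g : ι → ℝ}
    (hf : ∀ i, 0 ≤ f i) (hg : ∀ i, 0 ≤ g i) :
    ∑ i ∈ s, |f i - g i| ≤ ∑ i ∈ s, f i + ∑ i ∈ s, g i := by
  rw [← sum_add_distrib]
  gcongr with i
  exact abs_sub_le_iff.2 ⟨by linarith [hg i], by linarith [hf i]⟩

namespace Matrix

variable {n : Type*} [Fintype n]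

section LinearOrderedField

variable {𝕜 : Type*} [Field 𝕜] [LinearOrder 𝕜] [IsStrictOrderedRing 𝕜]

theorem sum_abs_vecMul_le {Q : Matrix n n 𝕜} (hQ : ∀ i j, 0 ≤ Q i j) (x : n → 𝕜) :
    ∑ j, |(x ᵥ* Q) j| ≤ ∑ i, |x i| * ∑ j, Q i j := calc
  ∑ j, |(x ᵥ* Q) j| ≤ ∑ j, ∑ i, |x i| * Q i j := by
    gcongr with j
    refine (abs_sum_le_sum_abs _ _).trans_eq (sum_congr rfl fun i _ ↦ ?_)
    rw [abs_mul, abs_of_nonneg (hQ i j)]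
  _ = ∑ i, |x i| * ∑ j, Q i j := by simp only [mul_sum]; exact sum_comm

variable [DecidableEq n] {P : Matrix n n 𝕜}

theorem sum_vecMul_of_mem_rowStochastic (hP : P ∈ rowStochastic 𝕜 n) (x : n → 𝕜) :
    ∑ j, (x ᵥ* P) j = ∑ i, x i := by
  rw [← dotProduct_one, ← dotProduct_one, ← dotProduct_mulVec, hP.2]

theorem sum_abs_vecMul_le_of_mem_rowStochastic (hP : P ∈ rowStochastic 𝕜 n) (x : n → 𝕜) :
    ∑ j, |(x ᵥ* P) j| ≤ ∑ i, |x i| := by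
  simpa [sum_row_of_mem_rowStochastic hP] using sum_abs_vecMul_le hP.1 x

/-- Doeblin's argument: on vectors of total mass zero, `P` acts as the nonnegative matrix
`P - δ`, whose rows sum to `1 - |n| δ`. -/
theorem sum_abs_vecMul_le_of_le_apply (hP : P ∈ rowStochastic 𝕜 n) {δ : 𝕜}
    (hδ : ∀ i j, δ ≤ P i j) {x : n → 𝕜} (hx : ∑ i, x i = 0) :
    ∑ j, |(x ᵥ* P) j| ≤ (1 - Fintype.card n * δ) * ∑ i, |x i| := by
  have hshift : x ᵥ* P = x ᵥ* of fun i j ↦ P i j - δ := by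
    ext j
    simp [vecMul, dotProduct, mul_sub, sum_sub_distrib, ← sum_mul, hx]
  calc ∑ j, |(x ᵥ* P) j| ≤ ∑ i, |x i| * ∑ j, of (fun i j ↦ P i j - δ) i j :=
        hshift ▸ sum_abs_vecMul_le (fun i j ↦ sub_nonneg.2 (hδ i j)) x
    _ = (1 - Fintype.card n * δ) * ∑ i, |x i| := by
        simp [sum_sub_distrib, sum_row_of_mem_rowStochastic hP, ← sum_mul, mul_comm]

theorem exists_sum_abs_vecMul_le_mul [Nonempty n] (hP : P ∈ rowStochastic 𝕜 n)
    (hpos : ∀ i j, 0 < P i j) :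
    ∃ r ∈ Set.Ioo (0 : 𝕜) 1, ∀ x : n → 𝕜, ∑ i, x i = 0 → ∑ j, |(x ᵥ* P) j| ≤ r * ∑ i, |x i| := by
  obtain ⟨⟨i₀, j₀⟩, hmin⟩ := Finite.exists_min fun p : n × n ↦ P p.1 p.2
  set δ := P i₀ j₀
  have hcδ : 0 < Fintype.card n * δ := mul_pos (by exact_mod_cast Fintype.card_pos) (hpos i₀ j₀)
  refine ⟨max (1 - Fintype.card n * δ) (1 / 2), ⟨by positivity, max_lt (by linarith) (by norm_num)⟩,
    fun x hx ↦ ?_⟩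
  calc ∑ j, |(x ᵥ* P) j| ≤ (1 - Fintype.card n * δ) * ∑ i, |x i| :=
        sum_abs_vecMul_le_of_le_apply hP (fun i j ↦ hmin (i, j)) hx
    _ ≤ _ := by gcongr; exact le_max_left _ _

theorem sum_abs_vecMul_pow_le (hP : P ∈ rowStochastic 𝕜 n) {r : 𝕜} (hr : 0 ≤ r)
    (hcontr : ∀ x : n → 𝕜, ∑ i, x i = 0 → ∑ j, |(x ᵥ* P) j| ≤ r * ∑ i, |x i|)
    {x : n → 𝕜} (hx : ∑ i, x i = 0) (k : ℕ) :
    ∑ j, |(x ᵥ* P ^ k) j| ≤ r ^ k * ∑ i, |x i| := by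
  induction k with
  | zero => simp
  | succ k ih =>
    have hsum : ∑ i, (x ᵥ* P ^ k) i = 0 := by
      rw [sum_vecMul_of_mem_rowStochastic (pow_mem hP k), hx]
    calc ∑ j, |(x ᵥ* P ^ (k + 1)) j| ≤ r * ∑ i, |(x ᵥ* P ^ k) i| := by
          rw [pow_succ, ← vecMul_vecMul]; exact hcontr _ hsum
      _ ≤ r ^ (k + 1) * ∑ i, |x i| := (mul_le_mul_of_nonneg_left ih hr).trans_eq (by ring)

theorem const_vecMul_of_mem_colStochastic (hP : P ∈ colStochastic 𝕜 n) (a : 𝕜) :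
    (fun _ ↦ a) ᵥ* P = fun _ ↦ a := by
  have hconst : (fun _ ↦ a) = a • (1 : n → 𝕜) := by ext; simp
  rw [hconst, smul_vecMul, one_vecMul_of_mem_colStochastic hP]

end LinearOrderedField

variable [DecidableEq n]

section OrderedSemiring

variable {R : Type*} [Semiring R] [PartialOrder R] [IsOrderedRing R] {A : Matrix n n R}

theorem pow_apply_mul_pow_apply_le (hA : ∀ i j, 0 ≤ A i j) (k l : ℕ) (i j m : n) :
    (A ^ k) i j * (A ^ l) j m ≤ (A ^ (k + l)) i m := by
  rw [pow_add, mul_apply]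
  exact single_le_sum (fun t _ ↦ mul_nonneg (pow_apply_nonneg hA k i t)
    (pow_apply_nonneg hA l t m)) (mem_univ j)

variable [PosMulStrictMono R]

theorem eventually_pow_apply_self_pos (hA : ∀ i j, 0 ≤ A i j) {i : n}
    (hi : Nat.setGcd {k | 0 < (A ^ k) i i} = 1) : ∀ᶠ k in atTop, 0 < (A ^ k) i i :=
  Nat.eventually_mem_of_add_mem_of_setGcd_eq_one
    (fun k hk l hl ↦ (mul_pos hk hl).trans_le (pow_apply_mul_pow_apply_le hA k l i i i)) hi

theorem eventually_pow_apply_pos (hA : ∀ i j, 0 ≤ A i j) (hirr : ∀ i j, ∃ k, 0 < (A ^ k) i j)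
    (haper : ∀ i, Nat.setGcd {k | 0 < (A ^ k) i i} = 1) :
    ∀ᶠ k in atTop, ∀ i j, 0 < (A ^ k) i j := by
  simp only [eventually_all]
  intro i j
  obtain ⟨l, hl⟩ := hirr i j
  filter_upwards [(tendsto_sub_atTop_nat l).eventually (eventually_pow_apply_self_pos hA (haper i)),
    eventually_ge_atTop l] with k hk hlk
  have := pow_apply_mul_pow_apply_le hA (k - l) l i i j
  rw [Nat.sub_add_cancel hlk] at this
  exact (mul_pos hk hl).trans_le this

end OrderedSemiring

theorem exists_abs_vecMul_pow_le [Nonempty n] {P : Matrix n n ℝ} (hP : P ∈ rowStochastic ℝ n)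
    {N : ℕ} (hN : 0 < N) (hpos : ∀ i j, 0 < (P ^ N) i j) :
    ∃ C > 0, ∃ ρ ∈ Set.Ioo (0 : ℝ) 1, ∀ x : n → ℝ, ∑ i, x i = 0 →
      ∀ k j, |(x ᵥ* P ^ k) j| ≤ C * ρ ^ k * ∑ i, |x i| := by
  obtain ⟨r, ⟨hr0, hr1⟩, hr⟩ := exists_sum_abs_vecMul_le_mul (pow_mem hP N) hpos
  refine ⟨1 / r, by positivity, r ^ (N⁻¹ : ℝ),
    ⟨by positivity, Real.rpow_lt_one hr0.le hr1 (by positivity)⟩, fun x hx k j ↦ ?_⟩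
  have hmono : Antitone fun k ↦ ∑ j, |(x ᵥ* P ^ k) j| := antitone_nat_of_succ_le fun k ↦ by
    simp only [pow_succ, ← vecMul_vecMul]
    exact sum_abs_vecMul_le_of_mem_rowStochastic hP _
  have hdecay m : ∑ j, |(x ᵥ* P ^ (N * m)) j| ≤ r ^ m * ∑ i, |x i| := by
    simpa only [pow_mul] using sum_abs_vecMul_pow_le (pow_mem hP N) hr0.le hr hx m
  calc |(x ᵥ* P ^ k) j| ≤ ∑ j, |(x ᵥ* P ^ k) j| :=
        single_le_sum (f := fun j ↦ |(x ᵥ* P ^ k) j|) (fun _ _ ↦ abs_nonneg _) (mem_univ j)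
    _ ≤ (∑ i, |x i|) / r * (r ^ (N⁻¹ : ℝ)) ^ k :=
        hmono.le_div_mul_rpow_inv_pow hN hr0 hr1.le (by positivity) hdecay k
    _ = 1 / r * (r ^ (N⁻¹ : ℝ)) ^ k * ∑ i, |x i| := by ring

end Matrix

/-- Convergence of an irreducible aperiodic doubly stochastic Markov chain on a
finite state space to the uniform distribution, at a geometric rate, for any
initial distribution `μ`. -/
theorem doubly_stochastic_markov_convergence {S : Type*} [Fintype S] [DecidableEq S]
    [Nonempty S] (M : Matrix S S ℝ)
    (hentries : ∀ s s', 0 ≤ M s s' ∧ M s s' ≤ 1)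
    (hrow : ∀ s, ∑ s', M s s' = 1)
    (hcol : ∀ s', ∑ s, M s s' = 1)
    (hirr : ∀ s s', ∃ n : ℕ, 0 < n ∧ 0 < (M ^ n) s s')
    (haper : ∀ s, ∀ d : ℕ, (∀ n : ℕ, 0 < n → 0 < (M ^ n) s s → d ∣ n) → d = 1)
    (μ : S → ℝ) (hμ0 : ∀ s, 0 ≤ μ s) (hμ1 : ∑ s, μ s = 1) :
    ∃ C > 0, ∃ ρ ∈ Set.Ioo (0 : ℝ) 1, ∀ n : ℕ, ∀ s : S,
      |Matrix.vecMul μ (M ^ n) s - 1 / (Fintype.card S : ℝ)| ≤ C * ρ ^ n := by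
  have h0 s s' : 0 ≤ M s s' := (hentries s s').1
  have hM : M ∈ rowStochastic ℝ S := mem_rowStochastic_iff_sum.2 ⟨h0, hrow⟩
  have hMc : M ∈ colStochastic ℝ S := mem_colStochastic_iff_sum.2 ⟨h0, hcol⟩
  have hgcd s : Nat.setGcd {k | 0 < (M ^ k) s s} = 1 :=
    haper s _ fun _ _ hk ↦ Nat.setGcd_dvd_of_mem hk
  obtain ⟨N, hMN, hN⟩ := ((eventually_pow_apply_pos h0
    (fun s s' ↦ (hirr s s').imp fun _ ↦ And.right) hgcd).and (eventually_gt_atTop 0)).exists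
  obtain ⟨C, hC, ρ, ⟨hρ0, hρ1⟩, hconv⟩ := exists_abs_vecMul_pow_le hM hN hMN
  set c : ℝ := (Fintype.card S : ℝ)
  have hunif : ∑ _s : S, 1 / c = 1 := by simp [c]
  have hunif0 : ∀ _s : S, 0 ≤ 1 / c := fun _ ↦ by positivity
  set η : S → ℝ := μ - fun _ ↦ 1 / c
  have hmass : ∑ s, η s = 0 := by simp only [η, Pi.sub_apply, sum_sub_distrib, hμ1, hunif, sub_self]
  have hη : ∑ s, |η s| ≤ 2 :=
    (sum_abs_sub_le_sum_add_sum _ hμ0 hunif0).trans_eq (by rw [hμ1, hunif]; norm_num)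
  refine ⟨2 * C, by positivity, ρ, ⟨hρ0, hρ1⟩, fun n s ↦ ?_⟩
  calc |(μ ᵥ* M ^ n) s - 1 / c| = |(η ᵥ* M ^ n) s| := by
        rw [sub_vecMul, const_vecMul_of_mem_colStochastic (pow_mem hMc n)]; rfl
    _ ≤ C * ρ ^ n * ∑ s, |η s| := hconv η hmass n s
    _ ≤ C * ρ ^ n * 2 := by gcongr
    _ = 2 * C * ρ ^ n := by ring
end

section
/- Let g ≥ 2 and D = {d₁,…,d_t} ⊆ {0,…,g−1} with t ≥ 2 and d₁ < ⋯ < d_t. Let a be a positive integer with gcd(g, a) = 1 and set δ := gcd(a, d₂−d₁, …, d_t−d₁). If δ ≠ 1 and d₁ ≢ 0 (mod δ), then there exist residues b ∈ Z_a for which the set {n ∈ C_{g,D} : n ≡ b (mod a)} is nonempty but the relative density of this set inside C_{g,D} (over intervals [0, N)) does not converge to a positive limit; more precisely, for every b ∈ Z_a the limit of |{n ∈ C_{g,D} : n ≡ b (mod a)} ∩ [0,N)| / |C_{g,D} ∩ [0,N)| is either 0 or does not exist. -/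
/-!
Every digit of `D` is congruent to `d₁` modulo `δ`, so a number with exactly `k + 1` digits
from `D` is `≡ d₁ (1 + g + ⋯ + gᵏ) (mod δ)`. Consecutive values of this residue differ by
`d₁ gᵏ⁺¹ ≢ 0`, so for any residue `b` infinitely many digit lengths contribute nothing to the
class of `b`, while each extra digit at least doubles `|C ∩ [0, N)|`. Along `N = gᵏ` the relative
density therefore halves infinitely often, and its limit, if any, is `0`.
-/

open Filter Finset

def missingDigitSet (g : ℕ) (D : Finset ℕ) : Set ℕ :=
  {m | ∃ w : List ℕ, w ≠ [] ∧ (∀ d ∈ w, d ∈ D) ∧ Nat.ofDigits g w = m}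

noncomputable def relCount (A C : Set ℕ) (N : ℕ) : ℝ :=
  ((A ∩ Set.Iio N).ncard : ℝ) / (C ∩ Set.Iio N).ncard

lemma Nat.ofDigits_eq_mul_geom_sum {R : Type*} [CommSemiring R] (r c : R) (w : List ℕ)
    (hw : ∀ d ∈ w, (d : R) = c) : Nat.ofDigits r w = c * ∑ i ∈ range w.length, r ^ i := by
  induction w with
  | nil => simp [Nat.ofDigits]
  | cons d w ih =>
    rw [Nat.ofDigits, List.length_cons, sum_range_succ', ih fun x hx => hw x (by simp [hx]),
      hw d (by simp), pow_zero, mul_add, mul_one, mul_sum, mul_sum, mul_sum, add_comm]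
    exact congrArg (· + c) (sum_congr rfl fun i _ => by ring)

lemma frequently_ne_of_forall_succ_ne {α : Type*} {u : ℕ → α} (hu : ∀ n, u (n + 1) ≠ u n)
    (x : α) : ∃ᶠ n in atTop, u n ≠ x := by
  rw [frequently_atTop]
  intro n
  by_contra! h
  exact hu n (by rw [h n le_rfl, h (n + 1) n.le_succ])

lemma nonpos_of_tendsto_of_frequently_le_half {u : ℕ → ℝ} {L : ℝ}
    (hu : Tendsto u atTop (nhds L)) (hhalf : ∃ᶠ k in atTop, u (k + 1) ≤ u k / 2) : L ≤ 0 := by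
  have hgap : Tendsto (fun k => u k / 2 - u (k + 1)) atTop (nhds (L / 2 - L)) :=
    (hu.div_const 2).sub (hu.comp (tendsto_add_atTop_nat 1))
  have : L / 2 - L ∈ Set.Ici 0 :=
    isClosed_Ici.mem_of_frequently_of_tendsto (hhalf.mono fun k hk => sub_nonneg.mpr hk) hgap
  linarith [Set.mem_Ici.mp this]

lemma relCount_le_half {A C : Set ℕ} {N M : ℕ} (hA : A ∩ Set.Iio M ⊆ Set.Iio N)
    (hC : 2 * (C ∩ Set.Iio N).ncard ≤ (C ∩ Set.Iio M).ncard) (hpos : 0 < (C ∩ Set.Iio N).ncard) :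
    relCount A C M ≤ relCount A C N / 2 := by
  have hAM : (A ∩ Set.Iio M).ncard ≤ (A ∩ Set.Iio N).ncard :=
    Set.ncard_le_ncard (fun m hm => ⟨hm.1, hA hm⟩) ((Set.finite_Iio N).inter_of_right A)
  have hC' : (2 * (C ∩ Set.Iio N).ncard : ℝ) ≤ (C ∩ Set.Iio M).ncard := by exact_mod_cast hC
  have hpos' : (0 : ℝ) < (C ∩ Set.Iio N).ncard := by exact_mod_cast hpos
  unfold relCount
  rw [div_div, mul_comm _ (2 : ℝ)]
  calc ((A ∩ Set.Iio M).ncard : ℝ) / (C ∩ Set.Iio M).ncard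
      ≤ (A ∩ Set.Iio N).ncard / (C ∩ Set.Iio M).ncard := by gcongr
    _ ≤ (A ∩ Set.Iio N).ncard / (2 * (C ∩ Set.Iio N).ncard) := by gcongr

section missingDigitSet

variable {g : ℕ} {D : Finset ℕ}

lemma mem_missingDigitSet_of_mem {d : ℕ} (hd : d ∈ D) : d ∈ missingDigitSet g D :=
  ⟨[d], by simp, by simpa using hd, Nat.ofDigits_singleton⟩

lemma add_mul_mem_missingDigitSet {d m : ℕ} (hd : d ∈ D) (hm : m ∈ missingDigitSet g D) :
    d + g * m ∈ missingDigitSet g D := by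
  obtain ⟨w, -, hw, rfl⟩ := hm
  exact ⟨d :: w, List.cons_ne_nil d w, by simpa [hd] using hw, Nat.ofDigits_cons⟩

/-- Appending a lowest digit `d ∈ D` embeds `(C ∩ [0, N)) × D` into `C ∩ [0, gN)`. -/
lemma ncard_mul_card_le_ncard_missingDigitSet (hDsub : D ⊆ range g) (N : ℕ) :
    (missingDigitSet g D ∩ Set.Iio N).ncard * D.card ≤
      (missingDigitSet g D ∩ Set.Iio (g * N)).ncard := by
  have hlt : ∀ d ∈ D, d < g := fun d hd => mem_range.mp (hDsub hd)
  rw [← Set.ncard_coe_finset D, ← Set.ncard_prod]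
  refine Set.ncard_le_ncard_of_injOn (fun p => p.2 + g * p.1) ?_ ?_
    ((Set.finite_Iio _).inter_of_right _)
  · rintro ⟨m, d⟩ ⟨⟨hm, hmN⟩, hd⟩
    refine ⟨add_mul_mem_missingDigitSet hd hm, ?_⟩
    have : g * (m + 1) ≤ g * N := Nat.mul_le_mul_left g hmN
    simp only [Set.mem_Iio]
    linarith [hlt d hd]
  · rintro ⟨m, d⟩ ⟨-, hd⟩ ⟨m', d'⟩ ⟨-, hd'⟩ h
    have hg : 0 < g := (Nat.zero_le d).trans_lt (hlt d hd)
    simp only at h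
    have hdd : d = d' := by
      simpa [Nat.add_mul_mod_self_left, Nat.mod_eq_of_lt (hlt d hd),
        Nat.mod_eq_of_lt (hlt d' hd')] using congrArg (· % g) h
    subst hdd
    simp only [Prod.mk.injEq, and_true]
    exact Nat.eq_of_mul_eq_mul_left hg (by omega)

lemma ncard_missingDigitSet_pos (hD : D.Nonempty) (hDsub : D ⊆ range g) {N : ℕ} (hN : g ≤ N) :
    0 < (missingDigitSet g D ∩ Set.Iio N).ncard := by
  obtain ⟨d, hd⟩ := hD
  refine Set.ncard_pos ((Set.finite_Iio N).inter_of_right _) |>.mpr ⟨d, ?_, ?_⟩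
  · exact mem_missingDigitSet_of_mem hd
  · exact (mem_range.mp (hDsub hd)).trans_le hN

/-- Without the digit `0`, the number of digits of `m ∈ C` is determined by its size. -/
lemma cast_eq_mul_geom_sum_of_mem_missingDigitSet {R : Type*} [CommSemiring R] (hg : 1 < g)
    (hDsub : D ⊆ range g) (hD0 : 0 ∉ D) {c : R} (hc : ∀ d ∈ D, (d : R) = c) {m k : ℕ}
    (hm : m ∈ missingDigitSet g D) (hlo : g ^ k ≤ m) (hhi : m < g ^ (k + 1)) :
    (m : R) = c * ∑ i ∈ range (k + 1), (g : R) ^ i := by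
  obtain ⟨w, -, hw, rfl⟩ := hm
  have hdigits : Nat.digits g (Nat.ofDigits g w) = w :=
    Nat.digits_ofDigits g hg w (fun l hl => mem_range.mp (hDsub (hw l hl)))
      (fun h h0 => hD0 (h0 ▸ hw _ (List.getLast_mem h)))
  have hlen : w.length = k + 1 := by
    have hpos : Nat.ofDigits g w ≠ 0 := (Nat.pos_of_ne_zero (by positivity)).trans_le hlo |>.ne'
    rw [← hdigits, Nat.length_digits g _ hg hpos, Nat.log_eq_of_pow_le_of_lt_pow hlo hhi]
  rw [Nat.coe_ofDigits, Nat.ofDigits_eq_mul_geom_sum _ c w fun d hd => hc d (hw d hd), hlen]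

lemma eq_zero_of_tendsto_relCount_missingDigitSet (hg : 2 ≤ g) (hD : D.Nonempty)
    (hDsub : D ⊆ range g) (hcard : 2 ≤ D.card) {A : Set ℕ}
    (hA : ∃ᶠ k in atTop, A ∩ Set.Iio (g ^ (k + 1)) ⊆ Set.Iio (g ^ k)) {L : ℝ}
    (hL : Tendsto (relCount A (missingDigitSet g D)) atTop (nhds L)) : L = 0 := by
  have hdouble : ∀ N, 2 * (missingDigitSet g D ∩ Set.Iio N).ncard ≤
      (missingDigitSet g D ∩ Set.Iio (g * N)).ncard := fun N =>
    (mul_comm 2 _ ▸ Nat.mul_le_mul_left _ hcard :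
        2 * (missingDigitSet g D ∩ Set.Iio N).ncard ≤ _ * D.card).trans
      (ncard_mul_card_le_ncard_missingDigitSet hDsub N)
  have hhalf : ∃ᶠ k in atTop, relCount A (missingDigitSet g D) (g ^ (k + 1)) ≤
      relCount A (missingDigitSet g D) (g ^ k) / 2 := by
    refine (hA.and_eventually (eventually_ge_atTop 1)).mono fun k ⟨hk, hk1⟩ => ?_
    refine relCount_le_half hk (pow_succ' g k ▸ hdouble _) (ncard_missingDigitSet_pos hD hDsub ?_)
    simpa using Nat.pow_le_pow_right (by omega : 0 < g) hk1
  refine le_antisymm (nonpos_of_tendsto_of_frequently_le_half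
    (hL.comp (tendsto_pow_atTop_atTop_of_one_lt (by omega))) hhalf) ?_
  exact ge_of_tendsto' hL fun N => by unfold relCount; positivity

lemma frequently_residueClass_missingDigitSet_subset (hg : 1 < g) (hDsub : D ⊆ range g)
    (hD0 : 0 ∉ D) {a δ : ℕ} (hδa : δ ∣ a) (hgδ : Nat.Coprime g δ) {c : ZMod δ} (hc0 : c ≠ 0)
    (hc : ∀ d ∈ D, (d : ZMod δ) = c) (b : ℕ) :
    ∃ᶠ k in atTop, missingDigitSet g D ∩ {n | n % a = b} ∩ Set.Iio (g ^ (k + 1)) ⊆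
      Set.Iio (g ^ k) := by
  have hstep : ∀ k, c * ∑ i ∈ range (k + 1 + 1), (g : ZMod δ) ^ i ≠
      c * ∑ i ∈ range (k + 1), (g : ZMod δ) ^ i := fun k h => by
    rw [sum_range_succ _ (k + 1), mul_add, add_eq_left] at h
    exact hc0 ((((ZMod.isUnit_iff_coprime g δ).mpr hgδ).pow (k + 1)).mul_left_eq_zero.mp h)
  refine (frequently_ne_of_forall_succ_ne
    (u := fun k => c * ∑ i ∈ range (k + 1), (g : ZMod δ) ^ i) hstep b).mono fun k hk => ?_
  rintro m ⟨⟨hm, hmb⟩, hmk⟩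
  by_contra hlo
  rw [Set.mem_Iio, not_lt] at hlo
  refine hk ((cast_eq_mul_geom_sum_of_mem_missingDigitSet hg hDsub hD0 hc hm hlo hmk).symm.trans
    ?_)
  rw [← hmb.out]
  exact (ZMod.natCast_eq_natCast_iff _ _ _).mpr ((Nat.mod_modEq m a).symm.of_dvd hδa)

end missingDigitSet

theorem missing_digits_degenerate_distribution_general (g a : ℕ) (hg : 2 ≤ g) (ha : 1 ≤ a)
    (hgcd : Nat.gcd g a = 1)
    (D : Finset ℕ) (hD : D.Nonempty) (hDsub : D ⊆ Finset.range g) (hcard : 2 ≤ D.card)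
    (hd1 : ¬ (Nat.gcd a (D.gcd fun d => d - D.min' hD)) ∣ D.min' hD)
    (C : Set ℕ)
    (hC : C = {m : ℕ | ∃ w : List ℕ, w ≠ [] ∧ (∀ d ∈ w, d ∈ D) ∧ Nat.ofDigits g w = m}) :
    (∃ b < a, (C ∩ {n | n % a = b}).Nonempty ∧ ∀ L : ℝ, 0 < L →
      ¬ Tendsto (fun N : ℕ =>
          ((C ∩ {n | n % a = b} ∩ Set.Iio N).ncard : ℝ) / ((C ∩ Set.Iio N).ncard))
        atTop (nhds L)) ∧
    (∀ b < a, ∀ L : ℝ,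
      Tendsto (fun N : ℕ =>
          ((C ∩ {n | n % a = b} ∩ Set.Iio N).ncard : ℝ) / ((C ∩ Set.Iio N).ncard))
        atTop (nhds L) → L = 0) := by
  subst hC
  set d₁ := D.min' hD
  set δ := Nat.gcd a (D.gcd fun d => d - d₁)
  have hδa : δ ∣ a := Nat.gcd_dvd_left _ _
  have hD0 : 0 ∉ D := fun h0 => hd1 <| by
    rw [show d₁ = 0 from Nat.le_zero.mp (D.min'_le 0 h0)]; exact dvd_zero δ
  have hdigits : ∀ d ∈ D, (d : ZMod δ) = d₁ := fun d hd =>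
    (ZMod.natCast_eq_natCast_iff _ _ _).mpr ((Nat.modEq_iff_dvd' (D.min'_le d hd)).mpr
      ((Nat.gcd_dvd_right _ _).trans (Finset.gcd_dvd (f := fun d => d - d₁) hd))).symm
  have key : ∀ b L, Tendsto (relCount (missingDigitSet g D ∩ {n | n % a = b})
      (missingDigitSet g D)) atTop (nhds L) → L = 0 := fun b _ =>
    eq_zero_of_tendsto_relCount_missingDigitSet hg hD hDsub hcard
      (frequently_residueClass_missingDigitSet_subset (by omega) hDsub hD0 hδa
        (Nat.Coprime.coprime_dvd_right hδa hgcd) (mt (ZMod.natCast_eq_zero_iff _ _).mp hd1)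
        hdigits b)
  exact ⟨⟨d₁ % a, Nat.mod_lt _ (by omega), ⟨d₁, mem_missingDigitSet_of_mem (D.min'_mem hD), rfl⟩,
    fun L hL h => hL.ne' (key _ L h)⟩, fun b _ L => key b L⟩

/-- If `δ := gcd(a, d₂-d₁, …, d_t-d₁) ≠ 1` and `d₁ ≢ 0 (mod δ)`, then there is a
residue class which meets `C_{g,D}` but whose relative density in `C_{g,D}` does
not converge to a positive limit; more precisely, for every residue `b`, the
relative density either converges to `0` or does not converge at all. -/
theorem missing_digits_degenerate_distribution (g a : ℕ) (hg : 2 ≤ g) (ha : 1 ≤ a)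
    (hgcd : Nat.gcd g a = 1)
    (D : Finset ℕ) (hD : D.Nonempty) (hDsub : D ⊆ Finset.range g) (hcard : 2 ≤ D.card)
    (hδ : Nat.gcd a (D.gcd fun d => d - D.min' hD) ≠ 1)
    (hd1 : ¬ (Nat.gcd a (D.gcd fun d => d - D.min' hD)) ∣ D.min' hD)
    (C : Set ℕ)
    (hC : C = {m : ℕ | ∃ w : List ℕ, w ≠ [] ∧ (∀ d ∈ w, d ∈ D) ∧ Nat.ofDigits g w = m}) :
    (∃ b < a, (C ∩ {n | n % a = b}).Nonempty ∧ ∀ L : ℝ, 0 < L →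
      ¬ Tendsto (fun N : ℕ =>
          ((C ∩ {n | n % a = b} ∩ Set.Iio N).ncard : ℝ) / ((C ∩ Set.Iio N).ncard))
        atTop (nhds L)) ∧
    (∀ b < a, ∀ L : ℝ,
      Tendsto (fun N : ℕ =>
          ((C ∩ {n | n % a = b} ∩ Set.Iio N).ncard : ℝ) / ((C ∩ Set.Iio N).ncard))
        atTop (nhds L) → L = 0) :=
  missing_digits_degenerate_distribution_general g a hg ha hgcd D hD hDsub hcard hd1 C hC
end

section
/- Let g ≥ 4 and let D, D' be disjoint subsets of {0,…,g−1} with |D| = 2 and |D'| = 3, and set a := g. Let A := C_{g,D} ∪ C_{g,D'} be the set of integers all of whose base-g digits lie in D, or all of whose base-g digits lie in D'. Fix d₀ ∈ D. Then dim_M(A) = log 3 / log g, dim_M(A ∩ (aℕ + d₀)) = log 2 / log g, and in particular 0 < dim_M(A ∩ (aℕ + d₀)) < dim_M(A). -/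
/-!
A number below `g ^ k` all of whose base-`g` digits lie in `E` is the value of a word of length
at most `k` over `E`, so there are at most `∑_{j ≤ k} |E| ^ j < |E| ^ (k + 1)` of them; conversely
`d` followed by any of the `|E| ^ k` words of length `k` gives distinct such numbers below
`g ^ (k + 1)`, all `≡ d (mod g)`. Counts of order `b ^ k` at the scales `g ^ k` force the
log-ratio to tend to `log b / log g`. For `C_{g,D} ∪ C_{g,D'}` the larger digit set wins, giving
`log 3 / log g`; on `gℕ + d₀` the last digit `d₀ ∈ D` excludes `C_{g,D'}` (as `D ∩ D' = ∅`),
leaving `log 2 / log g`.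
-/

open Filter Topology Finset

theorem tendsto_div_of_abs_sub_mul_le {α : Type*} {l : Filter α} {x k : α → ℝ} {a c : ℝ}
    (hk : Tendsto k l atTop) (hx : ∀ᶠ n in l, |x n - a * k n| ≤ c) :
    Tendsto (fun n => x n / k n) l (𝓝 a) := by
  have herr : Tendsto (fun n => (x n - a * k n) / k n) l (𝓝 0) := by
    refine squeeze_zero_norm' ?_ ((tendsto_const_nhds (x := c)).div_atTop hk)
    filter_upwards [hx, hk.eventually_gt_atTop 0] with n hxn hkn
    rw [norm_div, Real.norm_of_nonneg hkn.le]
    exact div_le_div_of_nonneg_right hxn hkn.le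
  rw [← add_zero a]
  refine (herr.const_add a).congr' ?_
  filter_upwards [hk.eventually_gt_atTop 0] with n hkn
  field_simp
  ring

theorem tendsto_natLog_atTop {g : ℕ} (hg : 1 < g) : Tendsto (Nat.log g) atTop atTop :=
  tendsto_atTop_atTop_of_monotone Nat.log_monotone fun k => ⟨g ^ k, (Nat.log_pow hg k).ge⟩

theorem abs_log_sub_mul_natLog_le {g N : ℕ} (hg : 1 < g) (hN : N ≠ 0) :
    |Real.log N - Real.log g * Nat.log g N| ≤ Real.log g := by
  have hlow := Nat.pow_log_le_self g hN
  have hup := Nat.lt_pow_succ_log_self hg N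
  have h1 : Real.log g * Nat.log g N ≤ Real.log N := by
    rw [mul_comm, ← Real.log_pow]
    exact Real.log_le_log (by positivity) (by exact_mod_cast hlow)
  have h2 : Real.log N ≤ Real.log g * (Nat.log g N + 1) := by
    rw [mul_comm, ← Nat.cast_succ, ← Real.log_pow]
    exact Real.log_le_log (by positivity) (by exact_mod_cast hup.le)
  rw [abs_le]
  constructor <;> nlinarith [Real.log_nonneg (show (1:ℝ) ≤ g by exact_mod_cast hg.le)]

theorem abs_log_ncard_sub_mul_natLog_le {S : Set ℕ} {g b C : ℕ} (hg : 1 < g) (hb : 0 < b)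
    (hlow : ∀ k, b ^ k ≤ (S ∩ Set.Iio (g ^ (k + 1))).ncard)
    (hup : ∀ k, (S ∩ Set.Iio (g ^ k)).ncard ≤ C * b ^ k) {N : ℕ} (hN : g ≤ N) :
    |Real.log (S ∩ Set.Iio N).ncard - Real.log b * Nat.log g N| ≤ Real.log b + Real.log C := by
  have hmono : Monotone fun N => (S ∩ Set.Iio N).ncard := fun N M h =>
    Set.ncard_le_ncard (Set.inter_subset_inter_right _ (Set.Iio_subset_Iio h))
      ((Set.finite_Iio M).inter_of_right _)
  obtain ⟨j, hj⟩ : ∃ j, Nat.log g N = j + 1 :=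
    Nat.exists_eq_add_one.mpr (Nat.log_pos hg hN)
  have hN0 : N ≠ 0 := by omega
  have hcount_low : b ^ j ≤ (S ∩ Set.Iio N).ncard :=
    (hlow j).trans (hmono (hj ▸ Nat.pow_log_le_self g hN0))
  have hcount_up : (S ∩ Set.Iio N).ncard ≤ C * b ^ (j + 2) :=
    (hmono (hj ▸ Nat.lt_pow_succ_log_self hg N).le).trans (hup (j + 2))
  have hpos : (0 : ℝ) < (S ∩ Set.Iio N).ncard := by
    exact_mod_cast (Nat.pow_pos (n := j) hb).trans_le hcount_low
  have h1 : Real.log b * j ≤ Real.log (S ∩ Set.Iio N).ncard := by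
    rw [mul_comm, ← Real.log_pow]
    exact Real.log_le_log (by positivity) (by exact_mod_cast hcount_low)
  have h2 : Real.log (S ∩ Set.Iio N).ncard ≤ Real.log C + Real.log b * ((j + 2 : ℕ) : ℝ) := by
    have hC : (0 : ℝ) < C := by
      have := hpos.trans_le (show _ ≤ ((C * b ^ (j + 2) : ℕ) : ℝ) by exact_mod_cast hcount_up)
      push_cast at this
      exact pos_of_mul_pos_left this (by positivity)
    rw [mul_comm (Real.log b), ← Real.log_pow, ← Real.log_mul hC.ne' (by positivity)]
    exact Real.log_le_log hpos (by exact_mod_cast hcount_up)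
  rw [hj, abs_le]
  push_cast at h2 ⊢
  constructor <;> nlinarith [Real.log_natCast_nonneg b, Real.log_natCast_nonneg C]

theorem tendsto_log_ncard_inter_Iio {S : Set ℕ} {g b C : ℕ} (hg : 1 < g) (hb : 0 < b)
    (hlow : ∀ k, b ^ k ≤ (S ∩ Set.Iio (g ^ (k + 1))).ncard)
    (hup : ∀ k, (S ∩ Set.Iio (g ^ k)).ncard ≤ C * b ^ k) :
    Tendsto (fun N : ℕ => Real.log (S ∩ Set.Iio N).ncard / Real.log N) atTop
      (𝓝 (Real.log b / Real.log g)) := by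
  have hk : Tendsto (fun N : ℕ => (Nat.log g N : ℝ)) atTop atTop :=
    tendsto_natCast_atTop_atTop.comp (tendsto_natLog_atTop hg)
  have hcount := tendsto_div_of_abs_sub_mul_le hk <| (eventually_ge_atTop g).mono
    fun N hN => abs_log_ncard_sub_mul_natLog_le hg hb hlow hup hN
  have hlogN := tendsto_div_of_abs_sub_mul_le hk <| (eventually_ne_atTop 0).mono
    fun N hN => abs_log_sub_mul_natLog_le hg hN
  refine (hcount.div hlogN (Real.log_pos (by exact_mod_cast hg)).ne').congr' ?_
  filter_upwards [hk.eventually_gt_atTop 0] with N hN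
  exact div_div_div_cancel_right₀ hN.ne' _ _

-- The paper's `C_{g,E}`; words may end in zeros, so `0 ∈ C_{g,E}` exactly when `0 ∈ E`.
def restrictedDigits (g : ℕ) (E : Finset ℕ) : Set ℕ :=
  {m | ∃ w : List ℕ, w ≠ [] ∧ (∀ d ∈ w, d ∈ E) ∧ Nat.ofDigits g w = m}

def ofDigitsWords (g : ℕ) (E : Finset ℕ) (k : ℕ) : Finset ℕ :=
  (Fintype.piFinset fun _ : Fin k => E).image fun f => Nat.ofDigits g (List.ofFn f)

theorem card_ofDigitsWords_le (g : ℕ) (E : Finset ℕ) (k : ℕ) :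
    #(ofDigitsWords g E k) ≤ #E ^ k :=
  card_image_le.trans (Fintype.card_piFinset_const E k).le

theorem card_ofDigitsWords {g : ℕ} (hg : 1 < g) {E : Finset ℕ} (hE : ∀ d ∈ E, d < g) (k : ℕ) :
    #(ofDigitsWords g E k) = #E ^ k := by
  rw [ofDigitsWords, card_image_of_injOn, Fintype.card_piFinset_const]
  intro f₁ hf₁ f₂ hf₂ h
  simp only [mem_coe, Fintype.mem_piFinset] at hf₁ hf₂
  refine List.ofFn_injective (Nat.ofDigits_inj_of_len_eq hg (by simp) ?_ ?_ h)
  · simpa [List.forall_mem_ofFn_iff] using fun i => hE _ (hf₁ i)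
  · simpa [List.forall_mem_ofFn_iff] using fun i => hE _ (hf₂ i)

theorem mem_ofDigitsWords_of_forall_mem {g : ℕ} {E : Finset ℕ} {w : List ℕ}
    (hw : ∀ d ∈ w, d ∈ E) : Nat.ofDigits g w ∈ ofDigitsWords g E w.length := by
  refine mem_image.mpr ⟨fun i : Fin w.length => w[(i : ℕ)], ?_, by rw [List.ofFn_getElem]⟩
  simpa using fun i => hw _ (List.getElem_mem i.2)

theorem ofDigits_take_of_lt_pow {g k : ℕ} {w : List ℕ}
    (hw : Nat.ofDigits g w < g ^ k) : Nat.ofDigits g (w.take k) = Nat.ofDigits g w := by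
  rcases le_or_gt w.length k with hk | hk
  · rw [List.take_of_length_le hk]
  have hsplit := congrArg (Nat.ofDigits g) (List.take_append_drop k w)
  rw [Nat.ofDigits_append, List.length_take_of_le hk.le] at hsplit
  rw [← hsplit] at hw ⊢
  have : Nat.ofDigits g (w.drop k) = 0 := by
    by_contra h
    have := Nat.le_mul_of_pos_right (g ^ k) (Nat.pos_of_ne_zero h)
    omega
  simp [this]

theorem restrictedDigits_inter_Iio_subset (g : ℕ) (E : Finset ℕ) (k : ℕ) :
    restrictedDigits g E ∩ Set.Iio (g ^ k) ⊆ ((range (k + 1)).biUnion (ofDigitsWords g E) :) := by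
  rintro _ ⟨⟨w, -, hw, rfl⟩, hlt⟩
  rw [← ofDigits_take_of_lt_pow hlt]
  exact mem_biUnion.mpr ⟨_, mem_range.mpr (Nat.lt_succ_of_le (List.length_take_le k w)),
    mem_ofDigitsWords_of_forall_mem fun d hd => hw d (List.mem_of_mem_take hd)⟩

theorem ncard_restrictedDigits_inter_Iio_le (g : ℕ) {E : Finset ℕ} (hE : 2 ≤ #E)
    (k : ℕ) : (restrictedDigits g E ∩ Set.Iio (g ^ k)).ncard ≤ #E ^ (k + 1) :=
  calc (restrictedDigits g E ∩ Set.Iio (g ^ k)).ncard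
      ≤ #((range (k + 1)).biUnion (ofDigitsWords g E)) := by
        rw [← Set.ncard_coe_finset]
        exact Set.ncard_le_ncard (restrictedDigits_inter_Iio_subset g E k) (finite_toSet _)
    _ ≤ ∑ j ∈ range (k + 1), #(ofDigitsWords g E j) := card_biUnion_le
    _ ≤ ∑ j ∈ range (k + 1), #E ^ j := sum_le_sum fun j _ => card_ofDigitsWords_le g E j
    _ ≤ #E ^ (k + 1) := (Nat.geomSum_lt hE fun j hj => mem_range.mp hj).le

theorem mod_mem_of_mem_restrictedDigits {g : ℕ} {E : Finset ℕ} (hE : ∀ d ∈ E, d < g) {m : ℕ}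
    (hm : m ∈ restrictedDigits g E) : m % g ∈ E := by
  obtain ⟨_ | ⟨d, w⟩, hne, hw, rfl⟩ := hm
  · exact absurd rfl hne
  have hd : d ∈ E := hw d List.mem_cons_self
  rwa [Nat.ofDigits_cons, Nat.add_mul_mod_self_left, Nat.mod_eq_of_lt (hE d hd)]

theorem image_ofDigitsWords_subset {g : ℕ} (hg : 1 < g) {E : Finset ℕ} (hE : ∀ d ∈ E, d < g)
    {d : ℕ} (hd : d ∈ E) (k : ℕ) :
    (((ofDigitsWords g E k).image fun x => d + g * x : Finset ℕ) : Set ℕ) ⊆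
      restrictedDigits g E ∩ {n | n % g = d} ∩ Set.Iio (g ^ (k + 1)) := by
  intro _ hm
  obtain ⟨_, hx, rfl⟩ := mem_image.mp hm
  obtain ⟨f, hf, rfl⟩ := mem_image.mp hx
  simp only [Fintype.mem_piFinset] at hf
  have hfE : ∀ e ∈ List.ofFn f, e ∈ E := by simpa [List.forall_mem_ofFn_iff] using hf
  have hlt : Nat.ofDigits g (List.ofFn f) < g ^ k := by
    simpa using Nat.ofDigits_lt_base_pow_length hg fun e he => hE e (hfE e he)
  refine ⟨⟨⟨d :: List.ofFn f, List.cons_ne_nil _ _, ?_, Nat.ofDigits_cons⟩, ?_⟩, ?_⟩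
  · simpa [hd] using hfE
  · simp [Nat.add_mul_mod_self_left, Nat.mod_eq_of_lt (hE d hd)]
  · have := hE d hd
    rw [Set.mem_Iio, pow_succ]
    nlinarith

theorem pow_le_ncard_restrictedDigits_inter_mod {g : ℕ} (hg : 1 < g) {E : Finset ℕ}
    (hE : ∀ d ∈ E, d < g) {d : ℕ} (hd : d ∈ E) (k : ℕ) :
    #E ^ k ≤ (restrictedDigits g E ∩ {n | n % g = d} ∩ Set.Iio (g ^ (k + 1))).ncard := by
  have hinj : Function.Injective fun x => d + g * x := fun x y h =>
    Nat.eq_of_mul_eq_mul_left (by omega) (Nat.add_left_cancel h)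
  rw [← card_ofDigitsWords hg hE k, ← card_image_of_injective _ hinj, ← Set.ncard_coe_finset]
  exact Set.ncard_le_ncard (image_ofDigitsWords_subset hg hE hd k)
    ((Set.finite_Iio _).inter_of_right _)

section Union

variable {g : ℕ} {E E' : Finset ℕ}

theorem union_restrictedDigits_inter_mod_subset (hE' : ∀ d ∈ E', d < g) (hdisj : Disjoint E E')
    {d : ℕ} (hd : d ∈ E) :
    (restrictedDigits g E ∪ restrictedDigits g E') ∩ {n | n % g = d} ⊆ restrictedDigits g E := by
  rintro m ⟨hm | hm, hmod⟩
  · exact hm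
  · exact absurd (hmod ▸ mod_mem_of_mem_restrictedDigits hE' hm) (disjoint_left.mp hdisj hd)

theorem tendsto_log_ncard_union_restrictedDigits (hg : 1 < g) (hE' : ∀ d ∈ E', d < g)
    (hE : 2 ≤ #E) (hEE' : #E ≤ #E') :
    Tendsto (fun N : ℕ =>
        Real.log ((restrictedDigits g E ∪ restrictedDigits g E') ∩ Set.Iio N).ncard / Real.log N)
      atTop (𝓝 (Real.log #E' / Real.log g)) := by
  obtain ⟨d, hd⟩ : E'.Nonempty := card_pos.mp (by omega)
  refine tendsto_log_ncard_inter_Iio (C := 2 * #E') hg (by omega) (fun k => ?_) fun k => ?_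
  · refine (pow_le_ncard_restrictedDigits_inter_mod hg hE' hd k).trans
      (Set.ncard_le_ncard (fun m hm => ⟨Or.inr hm.1.1, hm.2⟩) ((Set.finite_Iio _).inter_of_right _))
  · calc ((restrictedDigits g E ∪ restrictedDigits g E') ∩ Set.Iio (g ^ k)).ncard
        ≤ (restrictedDigits g E ∩ Set.Iio (g ^ k)).ncard
          + (restrictedDigits g E' ∩ Set.Iio (g ^ k)).ncard := by
          rw [Set.union_inter_distrib_right]; exact Set.ncard_union_le _ _
      _ ≤ #E ^ (k + 1) + #E' ^ (k + 1) := add_le_add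
          (ncard_restrictedDigits_inter_Iio_le g hE k)
          (ncard_restrictedDigits_inter_Iio_le g (hE.trans hEE') k)
      _ ≤ 2 * #E' * #E' ^ k := by
          rw [mul_assoc, ← pow_succ', two_mul]
          exact add_le_add_left (Nat.pow_le_pow_left hEE' _) _

theorem tendsto_log_ncard_union_restrictedDigits_inter_mod (hg : 1 < g) (hE : ∀ d ∈ E, d < g)
    (hE' : ∀ d ∈ E', d < g) (hdisj : Disjoint E E') (hE2 : 2 ≤ #E) {d : ℕ} (hd : d ∈ E) :
    Tendsto (fun N : ℕ => Real.log ((restrictedDigits g E ∪ restrictedDigits g E') ∩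
        {n | n % g = d} ∩ Set.Iio N).ncard / Real.log N)
      atTop (𝓝 (Real.log #E / Real.log g)) := by
  refine tendsto_log_ncard_inter_Iio (C := #E) hg (by omega) (fun k => ?_) fun k => ?_
  · refine (pow_le_ncard_restrictedDigits_inter_mod hg hE hd k).trans
      (Set.ncard_le_ncard (fun m hm => ⟨⟨Or.inl hm.1.1, hm.1.2⟩, hm.2⟩)
        ((Set.finite_Iio _).inter_of_right _))
  · rw [← pow_succ']
    exact (Set.ncard_le_ncard (Set.inter_subset_inter_left _
      (union_restrictedDigits_inter_mod_subset hE' hdisj hd))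
        ((Set.finite_Iio _).inter_of_right _)).trans (ncard_restrictedDigits_inter_Iio_le g hE2 k)

end Union

/-- Counterexample: for `A = C_{g,D} ∪ C_{g,D'}` with `|D| = 2`, `|D'| = 3` disjoint
and the arithmetic progression `gℕ + d₀` with `d₀ ∈ D`, one has
`dim_M(A) = log 3 / log g` while `dim_M(A ∩ (gℕ + d₀)) = log 2 / log g`, which is
strictly between `0` and `dim_M(A)`. -/
theorem transversality_counterexample (g : ℕ) (hg : 4 ≤ g)
    (D D' : Finset ℕ) (hDsub : D ⊆ Finset.range g) (hD'sub : D' ⊆ Finset.range g)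
    (hdisj : Disjoint D D') (hcardD : D.card = 2) (hcardD' : D'.card = 3)
    (d₀ : ℕ) (hd₀ : d₀ ∈ D)
    (A : Set ℕ)
    (hA : A = {m : ℕ | ∃ w : List ℕ, w ≠ [] ∧
      ((∀ d ∈ w, d ∈ D) ∨ (∀ d ∈ w, d ∈ D')) ∧ Nat.ofDigits g w = m}) :
    Tendsto (fun N : ℕ => Real.log ((A ∩ Set.Iio N).ncard) / Real.log N) atTop
      (nhds (Real.log 3 / Real.log g)) ∧
    Tendsto (fun N : ℕ =>
        Real.log ((A ∩ {n | n % g = d₀} ∩ Set.Iio N).ncard) / Real.log N) atTop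
      (nhds (Real.log 2 / Real.log g)) ∧
    0 < Real.log 2 / Real.log g ∧
    Real.log 2 / Real.log g < Real.log 3 / Real.log g := by
  have hg1 : 1 < g := by omega
  have hD : ∀ d ∈ D, d < g := fun d hd => mem_range.mp (hDsub hd)
  have hD' : ∀ d ∈ D', d < g := fun d hd => mem_range.mp (hD'sub hd)
  have hA' : A = restrictedDigits g D ∪ restrictedDigits g D' := by
    ext m
    simp only [hA, restrictedDigits, Set.mem_union, Set.mem_ofPred_eq, ← exists_or, or_and_right,
      and_or_left]
  have hlogg : 0 < Real.log g := Real.log_pos (by exact_mod_cast hg1)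
  subst hA'
  refine ⟨?_, ?_, div_pos (Real.log_pos one_lt_two) hlogg,
    div_lt_div_of_pos_right (Real.log_lt_log two_pos (by norm_num)) hlogg⟩
  · simpa [hcardD'] using tendsto_log_ncard_union_restrictedDigits hg1 hD' (by omega) (by omega)
  · simpa [hcardD] using
      tendsto_log_ncard_union_restrictedDigits_inter_mod hg1 hD hD' hdisj (by omega) hd₀
end

section
/- Let g ≥ 2 and a ≥ 1. Suppose there exists n ≥ 1 with n ≡ 0 (mod a) and S_g(n) ≡ 1 (mod a'). Then for every pair (b, b') ∈ Z_a × Z_{a'} and every i ≥ a − 1, there exists a word w over the full digit set {0,…,g−1} whose length is a multiple of p (where p satisfies g^{i+p} ≡ g^i mod a for i ≥ a−1), such that g^i·(w)_g ≡ b (mod a) holds whenever b lies in the subgroup ⟨g^i⟩ of Z_a generated by g^i mod a, and S_g(w) ≡ b' (mod a'); conversely no word of length a multiple of p satisfies g^i(w)_g ≡ b (mod a) if b ∉ ⟨g^i⟩ + 0, i.e., if gcd(g^i, a) does not divide b. -/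
/-!
Pick `v` with `g^i v ≡ b (mod a)` (possible exactly when `gcd(g^i, a) ∣ b`) and write the
digits of `v`, followed by `k` copies of the digits of `n`, each block padded with zeros to a
length divisible by `p`. The copies of `n` are `≡ 0 (mod a)` and do not change the residue of
the value, while each adds `1 (mod a')` to the digit sum, so a suitable `k` fixes the digit sum.
Conversely `gcd(g^i, a)` divides both `a` and `g^i (w)_g`, hence any `b ≡ g^i (w)_g (mod a)`.
-/

open List

theorem Nat.exists_mul_modEq_of_gcd_dvd {c a b : ℕ} (h : Nat.gcd c a ∣ b) :
    ∃ v, c * v ≡ b [MOD a] := by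
  obtain ⟨t, rfl⟩ := h
  by_cases hlt : Nat.gcd c a < a
  · obtain ⟨m, -, hm⟩ := Nat.exists_mul_mod_eq_gcd hlt
    refine ⟨m * t, ?_⟩
    rw [← mul_assoc]
    exact Nat.ModEq.mul_right t (hm.trans (Nat.mod_eq_of_lt hlt).symm)
  · rcases Nat.eq_zero_or_pos a with rfl | ha
    · exact ⟨t, by rw [Nat.gcd_zero_right]⟩
    · have hgcd : Nat.gcd c a = a := le_antisymm (Nat.gcd_le_right c ha) (not_lt.mp hlt)
      rw [hgcd]
      exact ⟨0, (Nat.modEq_zero_iff_dvd.mpr (dvd_mul_right a t)).symm⟩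

theorem Nat.exists_pos_add_modEq {m : ℕ} (hm : 0 < m) (s b : ℕ) :
    ∃ k, 0 < k ∧ s + k ≡ b [MOD m] := by
  refine ⟨(m - 1) * s + m + b, by omega, ?_⟩
  have : s + ((m - 1) * s + m + b) = b + m * (s + 1) := by
    obtain ⟨m, rfl⟩ := Nat.exists_eq_add_of_lt hm
    rw [Nat.add_sub_cancel]
    ring
  rw [this]
  exact Nat.add_modEq_left_iff.mpr (dvd_mul_right _ _)

def padZeros (p : ℕ) (l : List ℕ) : List ℕ :=
  l ++ replicate ((p - 1) * l.length) 0

section padZeros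

variable {p g : ℕ} {l : List ℕ}

theorem length_padZeros (hp : 0 < p) : (padZeros p l).length = p * l.length := by
  obtain ⟨p, rfl⟩ := Nat.exists_eq_add_of_lt hp
  simp only [padZeros, length_append, length_replicate, Nat.add_sub_cancel]
  ring

theorem ofDigits_padZeros : Nat.ofDigits g (padZeros p l) = Nat.ofDigits g l :=
  Nat.ofDigits_append_replicate_zero l

theorem sum_padZeros : (padZeros p l).sum = l.sum := by
  simp [padZeros]

theorem lt_of_mem_padZeros (hg : 0 < g) (hl : ∀ d ∈ l, d < g) : ∀ d ∈ padZeros p l, d < g := by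
  simp only [padZeros, mem_append, mem_replicate]
  rintro d (hd | ⟨-, rfl⟩)
  exacts [hl d hd, hg]

end padZeros

theorem dvd_ofDigits_flatten_replicate {a g : ℕ} {B : List ℕ} (h : a ∣ Nat.ofDigits g B)
    (k : ℕ) : a ∣ Nat.ofDigits g (replicate k B).flatten := by
  induction k with
  | zero => simp
  | succ k ih =>
    rw [replicate_succ, flatten_cons, Nat.ofDigits_append]
    exact dvd_add h (ih.mul_left _)

theorem ofDigits_append_modEq_left {a g : ℕ} {u v : List ℕ} (h : a ∣ Nat.ofDigits g v) :
    Nat.ofDigits g (u ++ v) ≡ Nat.ofDigits g u [MOD a] := by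
  rw [Nat.ofDigits_append]
  exact Nat.add_modEq_left_iff.mpr (h.mul_left _)

theorem exists_word_ofDigits_modEq_sum_modEq {g a a' p : ℕ} (ha' : 0 < a') {u B : List ℕ}
    (hu : ∀ d ∈ u, d < g) (hpu : p ∣ u.length)
    (hB : ∀ d ∈ B, d < g) (hB0 : B ≠ []) (hpB : p ∣ B.length)
    (haB : a ∣ Nat.ofDigits g B) (hsB : B.sum ≡ 1 [MOD a']) (b' : ℕ) :
    ∃ w : List ℕ, (∀ d ∈ w, d < g) ∧ w ≠ [] ∧ p ∣ w.length ∧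
      Nat.ofDigits g w ≡ Nat.ofDigits g u [MOD a] ∧ w.sum ≡ b' [MOD a'] := by
  obtain ⟨k, hk, hks⟩ := Nat.exists_pos_add_modEq ha' u.sum b'
  refine ⟨u ++ (replicate k B).flatten, ?_, ?_, ?_,
    ofDigits_append_modEq_left (dvd_ofDigits_flatten_replicate haB k), ?_⟩
  · simp only [mem_append, mem_flatten, mem_replicate]
    rintro d (hd | ⟨_, ⟨-, rfl⟩, hd⟩)
    exacts [hu d hd, hB d hd]
  · simp [hB0, hk.ne']
  · simpa using dvd_add hpu (hpB.mul_left k)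
  · have hsum : (u ++ (replicate k B).flatten).sum = u.sum + k * B.sum := by simp
    rw [hsum]
    calc u.sum + k * B.sum ≡ u.sum + k * 1 [MOD a'] := (hsB.mul_left k).add_left _
      _ ≡ b' [MOD a'] := by rwa [mul_one]

theorem full_shift_reachable_classes_general (g a a' p : ℕ) (hg : 2 ≤ g) (hp : 1 ≤ p)
    (hn : ∃ n : ℕ, 1 ≤ n ∧ n % a = 0 ∧ (Nat.digits g n).sum % a' = 1) :
    ∀ b < a, ∀ b' < a', ∀ i : ℕ, a - 1 ≤ i →
      (Nat.gcd (g ^ i) a ∣ b →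
        ∃ w : List ℕ, (∀ d ∈ w, d < g) ∧ w ≠ [] ∧ p ∣ w.length ∧
          g ^ i * Nat.ofDigits g w ≡ b [MOD a] ∧
          w.sum ≡ b' [MOD a']) ∧
      (¬ Nat.gcd (g ^ i) a ∣ b →
        ∀ w : List ℕ, (∀ d ∈ w, d < g) → p ∣ w.length →
          ¬ (g ^ i * Nat.ofDigits g w ≡ b [MOD a])) := by
  obtain ⟨n, hn1, hna, hns⟩ := hn
  intro b _ b' hb' i _
  refine ⟨fun hdvd => ?_, fun hndvd w _ _ hw => hndvd ?_⟩
  · obtain ⟨v, hv⟩ := Nat.exists_mul_modEq_of_gcd_dvd hdvd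
    have hdigits : ∀ m, ∀ d ∈ padZeros p (Nat.digits g m), d < g := fun m =>
      lt_of_mem_padZeros (by omega) fun _ => Nat.digits_lt_base hg
    have hlen : ∀ m, p ∣ (padZeros p (Nat.digits g m)).length := fun m =>
      ⟨_, length_padZeros hp⟩
    have hB0 : padZeros p (Nat.digits g n) ≠ [] :=
      append_ne_nil_of_left_ne_nil (Nat.digits_ne_nil_iff_ne_zero.mpr (by omega)) _
    have haB : a ∣ Nat.ofDigits g (padZeros p (Nat.digits g n)) := by
      rw [ofDigits_padZeros, Nat.ofDigits_digits]
      exact Nat.dvd_of_mod_eq_zero hna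
    have hsB : (padZeros p (Nat.digits g n)).sum ≡ 1 [MOD a'] := by
      have := (Nat.mod_modEq (Nat.digits g n).sum a').symm
      rwa [hns, ← sum_padZeros (p := p)] at this
    obtain ⟨w, hwg, hw0, hwp, hwv, hws⟩ := exists_word_ofDigits_modEq_sum_modEq (by omega)
      (hdigits v) (hlen v) (hdigits n) hB0 (hlen n) haB hsB b'
    rw [ofDigits_padZeros, Nat.ofDigits_digits] at hwv
    exact ⟨w, hwg, hw0, hwp, (hwv.mul_left _).trans hv, hws⟩
  · exact (hw.dvd_iff (Nat.gcd_dvd_right _ _)).mp (dvd_mul_of_dvd_left (Nat.gcd_dvd_left _ _) _)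

/-- Over the full digit alphabet `{0,…,g-1}`: if some `n ≥ 1` satisfies
`n ≡ 0 (mod a)` and `S_g(n) ≡ 1 (mod a')`, and `p ≥ 1` satisfies
`g^(i+p) ≡ g^i (mod a)` for all `i ≥ a-1`, then for every pair `(b,b')` and every
`i ≥ a-1`: if `b` lies in the subgroup of `Z_a` generated by `g^i`
(i.e. `gcd(g^i, a) ∣ b`), there is a word `w` of length a positive multiple of `p`
with `g^i·(w)_g ≡ b (mod a)` and `S_g(w) ≡ b' (mod a')`; and conversely, if
`gcd(g^i, a)` does not divide `b`, no word of length a multiple of `p` satisfies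
`g^i·(w)_g ≡ b (mod a)`. -/
theorem full_shift_reachable_classes (g a a' p : ℕ) (hg : 2 ≤ g) (ha : 1 ≤ a)
    (ha' : 1 ≤ a') (hp : 1 ≤ p)
    (hper : ∀ i : ℕ, a - 1 ≤ i → g ^ (i + p) ≡ g ^ i [MOD a])
    (hn : ∃ n : ℕ, 1 ≤ n ∧ n % a = 0 ∧ (Nat.digits g n).sum % a' = 1) :
    ∀ b < a, ∀ b' < a', ∀ i : ℕ, a - 1 ≤ i →
      (Nat.gcd (g ^ i) a ∣ b →
        ∃ w : List ℕ, (∀ d ∈ w, d < g) ∧ w ≠ [] ∧ p ∣ w.length ∧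
          g ^ i * Nat.ofDigits g w ≡ b [MOD a] ∧
          w.sum ≡ b' [MOD a']) ∧
      (¬ Nat.gcd (g ^ i) a ∣ b →
        ∀ w : List ℕ, (∀ d ∈ w, d < g) → p ∣ w.length →
          ¬ (g ^ i * Nat.ofDigits g w ≡ b [MOD a])) :=
  full_shift_reachable_classes_general g a a' p hg hp hn
end

section
/- Let S ⊆ ℕ and let X_S ⊆ {0,1}^ℕ be the S-gap subshift (sequences in which the number of 0's between consecutive 1's always lies in S). For n ≥ 1 let s₁ < s₂ < ⋯ enumerate S and S_n := {s₁,…,s_n}. Then the topological entropies satisfy h(X_S) = sup_{n} h(X_{S_n}). -/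
open Filter

/-- The `S`-gap subshift: sequences over `{0,1}` in which the number of `0`'s
between consecutive `1`'s always lies in `S`. -/
def gapShift (S : Set ℕ) : Set (ℕ → Fin 2) :=
  {x | ∀ i j : ℕ, i < j → x i = 1 → x j = 1 →
    (∀ k, i < k → k < j → x k = 0) → (j - i - 1) ∈ S}

/-- The set of words of length `N` in the language of a subshift `X ⊆ {0,1}^ℕ`. -/
def langN (X : Set (ℕ → Fin 2)) (N : ℕ) : Set (Fin N → Fin 2) :=
  {w | ∃ x ∈ X, ∀ k : Fin N, w k = (x k : Fin 2)}

/-- Topological entropy of a subshift of `{0,1}^ℕ`, as the (limsup) exponential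
growth rate of the number of words in its language. -/
noncomputable def subshiftEntropy (X : Set (ℕ → Fin 2)) : ℝ :=
  limsup (fun N : ℕ => Real.log ((langN X N).ncard) / N) atTop

/-!
Words of `X_S` that begin and end with `1` (complete words) control the entropy from both sides.
A word of length `N` is a complete word of some length `M ≤ N`, shifted and padded with zeros,
and a complete word of length `M ≤ N + 2` only exhibits gaps from `S_N`; hence
`|L^N(X_S)| ≤ 1 + N (N + 1) max_{M ≤ N} |C_M(S_N)|`. Conversely, complete words of length `M` for
`T`, separated by `g ∈ T` zeros, concatenate to words of `X_T`, so `log |C_M(T)| ≤ (M + g) h(X_T)`.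
With `T = S_N` and `g = s₀` this gives `log |L^N(X_S)| ≤ 2 log (N + 1) + (N + s₀) sup_n h(X_{S_n})`.
-/

open Real Set

lemma Real.log_natCast_le_log {n : ℕ} {y : ℝ} (hy : 1 ≤ y) (h : (n : ℝ) ≤ y) :
    log n ≤ log y := by
  rcases n.eq_zero_or_pos with rfl | hn
  · simpa using log_nonneg hy
  · exact log_le_log (by exact_mod_cast hn) h

section Language

variable (X : Set (ℕ → Fin 2))

noncomputable def langGrowth (N : ℕ) : ℝ := log (langN X N).ncard / N

lemma subshiftEntropy_eq_limsup : subshiftEntropy X = limsup (langGrowth X) atTop := rfl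

lemma ncard_langN_le_two_pow (N : ℕ) : (langN X N).ncard ≤ 2 ^ N :=
  (ncard_le_ncard (subset_univ _)).trans (by simp [ncard_univ])

lemma ncard_langN_mono {N N' : ℕ} (h : N ≤ N') : (langN X N).ncard ≤ (langN X N').ncard := by
  refine (ncard_le_ncard (t := (fun w k => w (Fin.castLE h k)) '' langN X N') ?_).trans
    (ncard_image_le (toFinite _))
  rintro w ⟨x, hx, hw⟩
  exact ⟨fun k => x k, ⟨x, hx, fun _ => rfl⟩, funext fun k => (hw k).symm⟩

lemma langGrowth_nonneg (N : ℕ) : 0 ≤ langGrowth X N :=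
  div_nonneg (log_natCast_nonneg _) N.cast_nonneg

lemma langGrowth_le_log_two (N : ℕ) : langGrowth X N ≤ log 2 := by
  rcases N.eq_zero_or_pos with rfl | hN
  · simpa [langGrowth] using log_nonneg one_le_two
  rw [langGrowth, div_le_iff₀ (by positivity), mul_comm, ← log_pow]
  exact log_natCast_le_log (one_le_pow₀ one_le_two) (by exact_mod_cast ncard_langN_le_two_pow X N)

lemma isBoundedUnder_langGrowth : IsBoundedUnder (· ≤ ·) atTop (langGrowth X) :=
  isBoundedUnder_of ⟨log 2, langGrowth_le_log_two X⟩

lemma isCoboundedUnder_langGrowth : IsCoboundedUnder (· ≤ ·) atTop (langGrowth X) :=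
  isCoboundedUnder_le_of_le atTop (langGrowth_nonneg X)

lemma subshiftEntropy_nonneg : 0 ≤ subshiftEntropy X :=
  le_limsup_of_frequently_le (Eventually.of_forall (langGrowth_nonneg X)).frequently
    (isBoundedUnder_langGrowth X)

lemma subshiftEntropy_le_log_two : subshiftEntropy X ≤ log 2 :=
  limsup_le_of_le (isCoboundedUnder_langGrowth X) (Eventually.of_forall (langGrowth_le_log_two X))

lemma subshiftEntropy_mono {X Y : Set (ℕ → Fin 2)} (h : X ⊆ Y) :
    subshiftEntropy X ≤ subshiftEntropy Y := by
  refine limsup_le_limsup (Eventually.of_forall fun N => ?_) (isCoboundedUnder_langGrowth X)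
    (isBoundedUnder_langGrowth Y)
  have hsub : langN X N ⊆ langN Y N := fun w ⟨x, hx, hw⟩ => ⟨x, h hx, hw⟩
  by_cases hX : (langN X N).ncard = 0
  · simpa [langGrowth, hX] using langGrowth_nonneg Y N
  refine div_le_div_of_nonneg_right (log_le_log (by positivity) ?_) N.cast_nonneg
  exact_mod_cast ncard_le_ncard hsub

lemma subshiftEntropy_le_of_tendsto {u : ℕ → ℝ} {H : ℝ} (hu : Tendsto u atTop (nhds H))
    (h : ∀ᶠ N in atTop, langGrowth X N ≤ u N) : subshiftEntropy X ≤ H :=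
  (limsup_le_limsup h (isCoboundedUnder_langGrowth X) hu.isBoundedUnder_le).trans_eq hu.limsup_eq

lemma log_le_mul_subshiftEntropy {c L : ℕ} (hL : 0 < L)
    (h : ∀ r : ℕ, c ^ (r + 1) ≤ (langN X ((r + 1) * L)).ncard) :
    log c ≤ L * subshiftEntropy X := by
  rcases c.eq_zero_or_pos with rfl | hc
  · simpa using mul_nonneg L.cast_nonneg (subshiftEntropy_nonneg X)
  have hL' : (0 : ℝ) < L := by exact_mod_cast hL
  have hfreq : ∃ᶠ N in atTop, log c / L ≤ langGrowth X N := by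
    refine frequently_atTop.mpr fun b => ⟨(b + 1) * L, by nlinarith, ?_⟩
    have hlog : ((b + 1 : ℕ) : ℝ) * log c ≤ log (langN X ((b + 1) * L)).ncard := by
      rw [← log_pow]
      exact log_le_log (by positivity) (by exact_mod_cast h b)
    rw [langGrowth, Nat.cast_mul, div_le_div_iff₀ hL' (by positivity)]
    push_cast at hlog ⊢
    nlinarith
  have := le_limsup_of_frequently_le hfreq (isBoundedUnder_langGrowth X)
  rwa [div_le_iff₀ hL', ← subshiftEntropy_eq_limsup, mul_comm] at this

end Language

lemma Fin.eq_zero_of_ne_one (i : Fin 2) (hi : i ≠ 1) : i = 0 := by omega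

section GapShift

variable {S T : Set ℕ}

lemma gapShift_mono (h : S ⊆ T) : gapShift S ⊆ gapShift T :=
  fun _ hx i j hij hi hj hz => h (hx i j hij hi hj hz)

lemma shift_mem_gapShift {x : ℕ → Fin 2} (hx : x ∈ gapShift S) (a : ℕ) :
    (fun p => x (a + p)) ∈ gapShift S := by
  intro i j hij hi hj hz
  have := hx (a + i) (a + j) (by omega) hi hj fun k h1 h2 => by
    simpa [Nat.add_sub_cancel' (show a ≤ k by omega)] using hz (k - a) (by omega) (by omega)
  rwa [show a + j - (a + i) - 1 = j - i - 1 by omega] at this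

def truncate (M : ℕ) (x : ℕ → Fin 2) : ℕ → Fin 2 := fun p => if p < M then x p else 0

lemma truncate_mem_gapShift {x : ℕ → Fin 2} (hx : x ∈ gapShift S) (M : ℕ) :
    truncate M x ∈ gapShift S := by
  intro i j hij hi hj hz
  have hjM : j < M := by
    by_contra h
    simp [truncate, h] at hj
  refine hx i j hij ?_ ?_ fun k h1 h2 => ?_
  · simpa [truncate, show i < M by omega] using hi
  · simpa [truncate, hjM] using hj
  · simpa [truncate, show k < M by omega] using hz k h1 h2

/-- Words of length `M` of the `S`-gap shift that begin and end with `1`, encoded as sequences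
vanishing from position `M` on. -/
def completeWords (S : Set ℕ) (M : ℕ) : Set (ℕ → Fin 2) :=
  {x | x ∈ gapShift S ∧ x 0 = 1 ∧ x (M - 1) = 1 ∧ ∀ k, M ≤ k → x k = 0}

variable {M : ℕ} {x : ℕ → Fin 2}

lemma pos_of_mem_completeWords (hx : x ∈ completeWords S M) : 0 < M := by
  by_contra h
  have := hx.2.2.2 0 (by omega)
  rw [hx.2.1] at this
  exact one_ne_zero this

lemma completeWords_mono (h : ∀ m ∈ S, m + 2 ≤ M → m ∈ T) :
    completeWords S M ⊆ completeWords T M := by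
  rintro x ⟨hx, h0, hM, hz⟩
  refine ⟨fun i j hij hi hj hb => h _ (hx i j hij hi hj hb) ?_, h0, hM, hz⟩
  have : j < M := by
    by_contra hjM
    rw [hz j (by omega)] at hj
    exact zero_ne_one hj
  omega

lemma injOn_restrict_completeWords (S : Set ℕ) (M : ℕ) :
    InjOn (fun x (k : Fin M) => x k) (completeWords S M) := by
  intro x hx y hy hxy
  funext k
  rcases lt_or_ge k M with hk | hk
  · exact congrFun hxy ⟨k, hk⟩
  · rw [hx.2.2.2 k hk, hy.2.2.2 k hk]

lemma completeWords_finite (S : Set ℕ) (M : ℕ) : (completeWords S M).Finite :=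
  Finite.of_finite_image (toFinite _) (injOn_restrict_completeWords S M)

lemma ncard_completeWords_le (S : Set ℕ) (M : ℕ) :
    (completeWords S M).ncard ≤ (langN (gapShift S) M).ncard :=
  ncard_le_ncard_of_injOn _ (fun x hx => ⟨x, hx.1, fun _ => rfl⟩)
    (injOn_restrict_completeWords S M)

end GapShift

section Concat

variable {S : Set ℕ} {M M' g : ℕ}

def concat (L : ℕ) (x y : ℕ → Fin 2) : ℕ → Fin 2 := fun k => if k < L then x k else y (k - L)

lemma concat_add (L : ℕ) (x y : ℕ → Fin 2) (k : ℕ) : concat L x y (L + k) = y k := by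
  simp [concat]

lemma concat_mem_gapShift {x y : ℕ → Fin 2} (hx : x ∈ completeWords S M) (hy : y ∈ gapShift S)
    (hy0 : y 0 = 1) (hg : g ∈ S) : concat (M + g) x y ∈ gapShift S := by
  obtain ⟨hxS, -, hxM, hxz⟩ := hx
  intro i j hij hi hj hz
  by_cases hjL : j < M + g
  · simp only [concat, hjL, show i < M + g by omega, if_true] at hi hj
    exact hxS i j hij hi hj fun k h1 h2 => by
      simpa [concat, show k < M + g by omega] using hz k h1 h2
  by_cases hiL : M + g ≤ i
  · obtain ⟨i, rfl⟩ := Nat.exists_eq_add_of_le hiL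
    obtain ⟨j, rfl⟩ := Nat.exists_eq_add_of_le (hiL.trans hij.le)
    rw [concat_add] at hi hj
    have := hy i j (by omega) hi hj fun k h1 h2 => by
      simpa [concat_add] using hz (M + g + k) (by omega) (by omega)
    rwa [show M + g + j - (M + g + i) - 1 = j - i - 1 by omega]
  -- `i` must be the final `1` of `x` and `j` the initial `1` of `y`, at distance `g + 1`.
  have hiM : i < M := by
    by_contra h
    rw [concat, if_pos (by omega), hxz i (by omega)] at hi
    exact zero_ne_one hi
  have hi' : i = M - 1 := by
    by_contra h
    have := hz (M - 1) (by omega) (by omega)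
    rw [concat, if_pos (by omega), hxM] at this
    exact one_ne_zero this
  have hj' : j = M + g := by
    by_contra h
    have := hz (M + g) (by omega) (by omega)
    rw [concat, if_neg (by omega), Nat.sub_self, hy0] at this
    exact one_ne_zero this
  rwa [hi', hj', show M + g - (M - 1) - 1 = g by omega]

lemma concat_mem_completeWords {x y : ℕ → Fin 2} (hx : x ∈ completeWords S M)
    (hy : y ∈ completeWords S M') (hg : g ∈ S) :
    concat (M + g) x y ∈ completeWords S (M + g + M') := by
  have hM := pos_of_mem_completeWords hx
  have hM' := pos_of_mem_completeWords hy
  refine ⟨concat_mem_gapShift hx hy.1 hy.2.1 hg, ?_, ?_, fun k hk => ?_⟩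
  · simpa [concat, show 0 < M + g by omega] using hx.2.1
  · simpa [concat, show ¬ M + g + M' - 1 < M + g by omega,
      show M + g + M' - 1 - (M + g) = M' - 1 by omega] using hy.2.2.1
  · simpa [concat, show ¬ k < M + g by omega] using hy.2.2.2 (k - (M + g)) (by omega)

lemma injOn_concat (S : Set ℕ) (M g : ℕ) :
    InjOn (fun p : (ℕ → Fin 2) × (ℕ → Fin 2) => concat (M + g) p.1 p.2)
      (completeWords S M ×ˢ univ) := by
  rintro ⟨x, y⟩ ⟨hx, -⟩ ⟨x', y'⟩ ⟨hx', -⟩ h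
  refine Prod.ext (funext fun k => ?_) (funext fun k => ?_)
  · by_cases hk : k < M + g
    · simpa [concat, hk] using congrFun h k
    · rw [hx.2.2.2 k (by omega), hx'.2.2.2 k (by omega)]
  · simpa [concat_add] using congrFun h (M + g + k)

lemma ncard_mul_ncard_completeWords_le (hg : g ∈ S) :
    (completeWords S M).ncard * (completeWords S M').ncard
      ≤ (completeWords S (M + g + M')).ncard := by
  rw [← ncard_prod]
  exact ncard_le_ncard_of_injOn _ (fun p hp => concat_mem_completeWords hp.1 hp.2 hg)
    ((injOn_concat S M g).mono (prod_mono le_rfl (subset_univ _))) (completeWords_finite _ _)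

lemma ncard_completeWords_pow_le (hg : g ∈ S) (M r : ℕ) :
    (completeWords S M).ncard ^ (r + 1) ≤ (completeWords S ((r + 1) * M + r * g)).ncard := by
  induction r with
  | zero => simp
  | succ r ih =>
    calc (completeWords S M).ncard ^ (r + 2)
        = (completeWords S M).ncard ^ (r + 1) * (completeWords S M).ncard := pow_succ _ _
      _ ≤ (completeWords S ((r + 1) * M + r * g)).ncard * (completeWords S M).ncard :=
        Nat.mul_le_mul_right _ ih
      _ ≤ (completeWords S ((r + 1) * M + r * g + g + M)).ncard :=
        ncard_mul_ncard_completeWords_le hg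
      _ = (completeWords S ((r + 1 + 1) * M + (r + 1) * g)).ncard := by ring_nf

lemma log_ncard_completeWords_le (hg : g ∈ S) (M : ℕ) :
    log (completeWords S M).ncard ≤ (M + g) * subshiftEntropy (gapShift S) := by
  by_cases hc : (completeWords S M).ncard = 0
  · simpa [hc] using mul_nonneg (by positivity) (subshiftEntropy_nonneg _)
  have hM : 0 < M := pos_of_mem_completeWords (nonempty_of_ncard_ne_zero hc).some_mem
  exact_mod_cast log_le_mul_subshiftEntropy (gapShift S) (L := M + g) (by omega) fun r =>
    (ncard_completeWords_pow_le hg M r).trans <| (ncard_completeWords_le S _).trans <|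
      ncard_langN_mono _ (by nlinarith)

end Concat

section Decomposition

def padLeft (N i : ℕ) (c : ℕ → Fin 2) : Fin N → Fin 2 := fun k => if i ≤ k then c (k - i) else 0

/-- A nonzero legal word is the complete word between its first and last `1`, shifted right. -/
lemma exists_eq_padLeft {S : Set ℕ} {N : ℕ} {w : Fin N → Fin 2}
    (hw : w ∈ langN (gapShift S) N) (hw0 : w ≠ 0) :
    ∃ i < N, ∃ M ≤ N, ∃ c ∈ completeWords S M, w = padLeft N i c := by
  obtain ⟨x, hx, hwx⟩ := hw
  set P := (Finset.range N).filter (fun k => x k = 1)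
  have hmem : ∀ k, k ∈ P ↔ k < N ∧ x k = 1 := by simp [P]
  have hP : P.Nonempty := by
    by_contra hP
    refine hw0 (funext fun k => ?_)
    rw [hwx k]
    exact Fin.eq_zero_of_ne_one _ fun hk => hP ⟨k, (hmem k).2 ⟨k.isLt, hk⟩⟩
  set i := P.min' hP
  set j := P.max' hP
  have hi := (hmem i).1 (P.min'_mem hP)
  have hj := (hmem j).1 (P.max'_mem hP)
  have hij : i ≤ j := P.min'_le _ (P.max'_mem hP)
  refine ⟨i, hi.1, j - i + 1, by omega, truncate (j - i + 1) (fun p => x (i + p)),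
    ⟨truncate_mem_gapShift (shift_mem_gapShift hx i) _, ?_, ?_, fun k hk => ?_⟩, funext fun k => ?_⟩
  · simpa [truncate] using hi.2
  · simpa [truncate, show i + (j - i) = j by omega] using hj.2
  · simp [truncate, show ¬ k < j - i + 1 by omega]
  by_cases hk : x k = 1
  · have hik : i ≤ k := P.min'_le _ ((hmem k).2 ⟨k.isLt, hk⟩)
    have hkj : k ≤ j := P.le_max' _ ((hmem k).2 ⟨k.isLt, hk⟩)
    simp [hwx k, padLeft, truncate, hik, show k - i < j - i + 1 by omega,
      Nat.add_sub_cancel' hik]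
  · have hk0 := Fin.eq_zero_of_ne_one _ hk
    simp only [hwx k, hk0, padLeft, truncate]
    split_ifs with hik <;> first | rfl | simp [Nat.add_sub_cancel' hik, hk0]

lemma ncard_langN_gapShift_le (S : Set ℕ) (N : ℕ) :
    (langN (gapShift S) N).ncard
      ≤ N * ∑ M ∈ Finset.range (N + 1), (completeWords S M).ncard + 1 := by
  have hsub : langN (gapShift S) N ⊆ insert 0
      (⋃ p ∈ Finset.range N ×ˢ Finset.range (N + 1), padLeft N p.1 '' completeWords S p.2) := by
    intro w hw
    rcases eq_or_ne w 0 with rfl | hw0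
    · exact mem_insert _ _
    obtain ⟨i, hi, M, hM, c, hc, rfl⟩ := exists_eq_padLeft hw hw0
    refine mem_insert_of_mem _ (mem_biUnion (x := (i, M)) ?_ (mem_image_of_mem _ hc))
    simp [hi, Nat.lt_succ_of_le hM]
  calc (langN (gapShift S) N).ncard
      ≤ (⋃ p ∈ Finset.range N ×ˢ Finset.range (N + 1),
          padLeft N p.1 '' completeWords S p.2).ncard + 1 :=
        (ncard_le_ncard hsub).trans (ncard_insert_le _ _)
    _ ≤ ∑ p ∈ Finset.range N ×ˢ Finset.range (N + 1), (completeWords S p.2).ncard + 1 := by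
        gcongr
        refine (Finset.set_ncard_biUnion_le _ _).trans (Finset.sum_le_sum fun p _ => ?_)
        exact ncard_image_le (completeWords_finite _ _)
    _ = N * ∑ M ∈ Finset.range (N + 1), (completeWords S M).ncard + 1 := by
        simp [Finset.sum_product]

end Decomposition

lemma tendsto_log_add_one_div_natCast :
    Tendsto (fun N : ℕ => log ((N : ℝ) + 1) / N) atTop (nhds 0) := by
  have := (tendsto_pow_log_div_mul_add_atTop 1 (-1) 1 one_ne_zero).comp
    (tendsto_atTop_add_const_right _ 1 tendsto_natCast_atTop_atTop)
  exact this.congr fun N => by simp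

lemma tendsto_entropy_bound (a H : ℝ) :
    Tendsto (fun N : ℕ => (2 * log ((N : ℝ) + 1) + (N + a) * H) / N) atTop (nhds H) := by
  have h := ((tendsto_log_add_one_div_natCast.const_mul 2).add
    (tendsto_const_div_atTop_nhds_zero_nat (a * H))).const_add H
  rw [mul_zero, add_zero, add_zero] at h
  refine h.congr' ((eventually_ne_atTop 0).mono fun N hN => ?_)
  field_simp
  ring

section Enumeration

variable {S : Set ℕ} {s : ℕ → ℕ}

lemma completeWords_subset_initialSegment (hmono : StrictMono s) (hrange : range s = S)
    {n M : ℕ} (hM : M ≤ n + 2) : completeWords S M ⊆ completeWords {m | ∃ k ≤ n, s k = m} M :=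
  completeWords_mono fun m hm hmM => by
    obtain ⟨k, rfl⟩ := hrange ▸ hm
    exact ⟨k, hmono.le_apply.trans (by omega), rfl⟩

lemma log_ncard_langN_gapShift_le (hmono : StrictMono s) (hrange : range s = S) {H : ℝ}
    (hH : ∀ n, subshiftEntropy (gapShift {m | ∃ k ≤ n, s k = m}) ≤ H) (N : ℕ) :
    log (langN (gapShift S) N).ncard ≤ 2 * log ((N : ℝ) + 1) + (N + s 0) * H := by
  have hH0 : 0 ≤ H := (subshiftEntropy_nonneg _).trans (hH 0)
  set E := exp ((N + s 0) * H)
  have hcomp : ∀ M ∈ Finset.range (N + 1), ((completeWords S M).ncard : ℝ) ≤ E := by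
    intro M hM
    have hMN : M ≤ N := Finset.mem_range_succ_iff.mp hM
    have hsub := ncard_le_ncard (completeWords_subset_initialSegment hmono hrange
      (n := N) (M := M) (by omega)) (completeWords_finite _ _)
    calc ((completeWords S M).ncard : ℝ)
        ≤ exp (log (completeWords {m | ∃ k ≤ N, s k = m} M).ncard) :=
          (Nat.cast_le.mpr hsub).trans (le_exp_log _)
      _ ≤ E := exp_le_exp.mpr <| (log_ncard_completeWords_le
          (S := {m | ∃ k ≤ N, s k = m}) ⟨0, N.zero_le, rfl⟩ M).trans <|
          mul_le_mul (by gcongr) (hH N) (subshiftEntropy_nonneg _) (by positivity)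
  have hcount : ((langN (gapShift S) N).ncard : ℝ) ≤ ((N : ℝ) + 1) ^ 2 * E := by
    have hsum := Finset.sum_le_card_nsmul _ _ _ hcomp
    have hE : 1 ≤ E := one_le_exp (by positivity)
    have := ncard_langN_gapShift_le S N
    simp only [Finset.card_range, nsmul_eq_mul] at hsum
    calc ((langN (gapShift S) N).ncard : ℝ)
        ≤ N * ∑ M ∈ Finset.range (N + 1), ((completeWords S M).ncard : ℝ) + 1 := by
          exact_mod_cast this
      _ ≤ N * ((N + 1) * E) + 1 := by gcongr; exact_mod_cast hsum
      _ ≤ ((N : ℝ) + 1) ^ 2 * E := by nlinarith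
  calc log (langN (gapShift S) N).ncard ≤ log (((N : ℝ) + 1) ^ 2 * E) :=
        log_natCast_le_log (one_le_mul_of_one_le_of_one_le
          (one_le_pow₀ (le_add_of_nonneg_left N.cast_nonneg)) (one_le_exp (by positivity))) hcount
    _ = 2 * log ((N : ℝ) + 1) + (N + s 0) * H := by
        rw [log_mul (by positivity) (by positivity), log_pow, log_exp]
        push_cast
        ring

end Enumeration

theorem gap_shift_entropy_sup_general (S : Set ℕ)
    (s : ℕ → ℕ) (hmono : StrictMono s) (hrange : Set.range s = S) :
    subshiftEntropy (gapShift S)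
      = ⨆ n : ℕ, subshiftEntropy (gapShift {m : ℕ | ∃ k ≤ n, s k = m}) := by
  have hbdd : BddAbove (range fun n => subshiftEntropy (gapShift {m : ℕ | ∃ k ≤ n, s k = m})) :=
    ⟨log 2, forall_mem_range.mpr fun _ => subshiftEntropy_le_log_two _⟩
  refine le_antisymm ?_ (ciSup_le fun n => subshiftEntropy_mono (gapShift_mono ?_))
  · refine subshiftEntropy_le_of_tendsto _ (tendsto_entropy_bound (s 0) _)
      (Eventually.of_forall fun N => ?_)
    exact div_le_div_of_nonneg_right
      (log_ncard_langN_gapShift_le hmono hrange (le_ciSup hbdd) N) N.cast_nonneg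
  · rintro _ ⟨k, -, rfl⟩
    exact hrange ▸ mem_range_self k

/-- For an infinite set `S` enumerated in increasing order by `s`, the entropy of
the `S`-gap subshift is the supremum of the entropies of the `S_n`-gap subshifts,
where `S_n` consists of the `n` smallest elements of `S`. -/
theorem gap_shift_entropy_sup (S : Set ℕ) (hS : S.Infinite)
    (s : ℕ → ℕ) (hmono : StrictMono s) (hrange : Set.range s = S) :
    subshiftEntropy (gapShift S)
      = ⨆ n : ℕ, subshiftEntropy (gapShift {m : ℕ | ∃ k ≤ n, s k = m}) :=
  gap_shift_entropy_sup_general S s hmono hrange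
end
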